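/- arXiv:1705.04495 — 11 statements merged into one kernel-verified Lean document; each statement's English description precedes it below -/
import Mathlib

section
/- Every convex subshift is obtained by forbidding a set of balls: if Ω ⊆ C(A) is a closed subset invariant under the partial action of F(A), then Ω = Ω^𝓕 where 𝓕 is the set of all balls that do not occur in Ω, i.e. 𝓕 = B(C) \ B(Ω). -/
/-!
STATEMENT 2: Every convex subshift is obtained by forbidding a set of balls:
if `Ω ⊆ 𝒞(A)` is closed and invariant under the full convex shift, then
`Ω = Ω^𝓕` where `𝓕 = 𝓑(𝒞) \ 𝓑(Ω)` is the set of balls not occurring in `Ω`.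
-/

def RightConvex {A : Type} [DecidableEq A] (ξ : Set (FreeGroup A)) : Prop :=
  ∀ γ δ : FreeGroup A, γ * δ ∈ ξ →
    (γ * δ).norm = γ.norm + δ.norm → δ ∈ ξ

def ConvexCfg {A : Type} [DecidableEq A] (ξ : Set (FreeGroup A)) : Prop :=
  (1 : FreeGroup A) ∈ ξ ∧ RightConvex ξ

/-- The right translate `α.ξ = ξ · α⁻¹`. -/
def tr {A : Type} (α : FreeGroup A) (ξ : Set (FreeGroup A)) :
    Set (FreeGroup A) :=
  (· * α⁻¹) '' ξ

/-- The `n`-ball `ξ^n = {α ∈ ξ : |α| ≤ n}`. -/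
def ball {A : Type} [DecidableEq A] (n : ℕ) (ξ : Set (FreeGroup A)) :
    Set (FreeGroup A) :=
  {α ∈ ξ | α.norm ≤ n}

/-- `ξ ≢ B` for an `n`-ball `B`: no translate of `ξ` has `n`-ball `B`. -/
def Avoids {A : Type} [DecidableEq A] (n : ℕ) (B : Set (FreeGroup A))
    (ξ : Set (FreeGroup A)) : Prop :=
  ∀ α ∈ ξ, ball n (tr α ξ) ≠ B

/-- The convex subshift `Ω^𝓕` obtained by forbidding the set of balls `𝓕`
(a ball is a pair `(n, B)` of a radius and a set). -/
def ForbidSet {A : Type} [DecidableEq A]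
    (F : Set (ℕ × Set (FreeGroup A))) : Set (Set (FreeGroup A)) :=
  {ξ | ConvexCfg ξ ∧ ∀ p ∈ F, Avoids p.1 p.2 ξ}

theorem stmt2 (A : Type) [Fintype A] [DecidableEq A]
    (Ω : Set (Set (FreeGroup A)))
    -- `Ω` is a subspace of `𝒞(A)` ...
    (hsub : ∀ ξ ∈ Ω, ConvexCfg ξ)
    -- ... invariant under the full convex shift ...
    (hinv : ∀ ξ ∈ Ω, ∀ α ∈ ξ, tr α ξ ∈ Ω)
    -- ... and closed (in the topology inherited from `{0,1}^{F(A)}`).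
    (hclosed : IsClosed {f : FreeGroup A → Bool | {α | f α = true} ∈ Ω}) :
    Ω = ForbidSet {p | (∃ ξ, ConvexCfg ξ ∧ ball p.1 ξ = p.2) ∧
          ¬ ∃ ξ ∈ Ω, ball p.1 ξ = p.2} := by
  classical
  ext ξ
  constructor
  · intro hξ
    refine ⟨hsub ξ hξ, ?_⟩
    rintro ⟨n, B⟩ ⟨-, hno⟩ α hα hB
    exact hno ⟨tr α ξ, hinv ξ hξ α hα, hB⟩
  · rintro ⟨hc, hav⟩
    -- for each n, there is ξₙ ∈ Ω with the same n-ball as ξ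
    have key : ∀ n : ℕ, ∃ ξ' ∈ Ω, ball n ξ' = ball n ξ := by
      intro n
      by_contra hno
      have hmem : ((n, ball n ξ) : ℕ × Set (FreeGroup A)) ∈
          {p : ℕ × Set (FreeGroup A) | (∃ ζ, ConvexCfg ζ ∧ ball p.1 ζ = p.2) ∧
            ¬ ∃ ζ ∈ Ω, ball p.1 ζ = p.2} := ⟨⟨ξ, hc, rfl⟩, hno⟩
      have := hav _ hmem 1 hc.1
      apply this
      have : tr 1 ξ = ξ := by
        simp [tr]
      rw [this]
    choose ξs hξsΩ hξsball using key
    -- the indicator functions converge to the indicator of ξ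
    set f : ℕ → FreeGroup A → Bool := fun n α => decide (α ∈ ξs n) with hf
    set g : FreeGroup A → Bool := fun α => decide (α ∈ ξ) with hg
    have hmemf : ∀ n, f n ∈ {h : FreeGroup A → Bool | {α | h α = true} ∈ Ω} := by
      intro n
      have : {α | f n α = true} = ξs n := by
        ext α; simp [hf]
      simpa [this] using hξsΩ n
    have htend : Filter.Tendsto f Filter.atTop (nhds g) := by
      rw [tendsto_pi_nhds]
      intro α
      have : ∀ n ≥ α.norm, f n α = g α := by
        intro n hn
        have h1 := congrArg (α ∈ ·) (hξsball n)
        simp only [ball, Set.mem_setOf_eq, eq_iff_iff] at h1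
        simp only [hf, hg, decide_eq_decide]
        constructor
        · intro hα; exact (h1.mp ⟨hα, hn⟩).1
        · intro hα; exact (h1.mpr ⟨hα, hn⟩).1
      refine Filter.Tendsto.congr' ?_ tendsto_const_nhds
      filter_upwards [Filter.eventually_ge_atTop α.norm] with n hn
      exact (this n hn).symm
    have := hclosed.isSeqClosed hmemf htend
    have hgs : {α | g α = true} = ξ := by ext α; simp [hg]
    simp only [Set.mem_setOf_eq] at this
    rwa [hgs] at this
end

section
/- If (φ,Ψ) is a direct dynamical equivalence between partial actions θ : G ↷ Ω and θ' : H ↷ Ω' of discrete groups on topological spaces, then θ and θ' are dynamically equivalent; that is, there exist continuous maps a(g,x) ∈ H and b(h,y) ∈ G satisfying the cocycle and compatibility conditions (1)-(5) making the transformation groupoids isomorphic. Concretely, setting a(g,x) = Ψ(g) and b(h,y) the unique g ∈ G with Ψ(g) = h and y ∈ φ(Ω_{g^{-1}}), conditions (1)-(5) hold. -/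
/-!
STATEMENT 3: A direct dynamical equivalence between partial actions yields a
dynamical equivalence; concretely `a(g,x) = Ψ(g)` and `b(h,y)` the unique
`g` with `Ψ(g) = h` and `y ∈ φ(Ω_{g⁻¹})` satisfy conditions (1)-(5).
-/

/-- A (set-theoretic) partial action of a group `G` on `Ω`. -/
structure PartialAction (G : Type*) [Group G] (Ω : Type*) where
  dom : G → Set Ω
  act : G → Ω → Ω
  dom_one : dom 1 = Set.univ
  act_one : ∀ x, act 1 x = x
  mapsTo : ∀ g, Set.MapsTo (act g) (dom g⁻¹) (dom g)
  act_inv : ∀ g, ∀ x ∈ dom g⁻¹, act g⁻¹ (act g x) = x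
  act_mul : ∀ g h, ∀ x ∈ dom h⁻¹, act h x ∈ dom g⁻¹ →
    x ∈ dom (g * h)⁻¹ ∧ act (g * h) x = act g (act h x)

theorem stmt3 {G H Ω Ω' : Type*} [Group G] [Group H]
    [TopologicalSpace Ω] [TopologicalSpace Ω']
    (θ : PartialAction G Ω) (θ' : PartialAction H Ω')
    (hopen : ∀ g, IsOpen (θ.dom g)) (hopen' : ∀ h, IsOpen (θ'.dom h))
    (Ψ : G →* H) (φ : Ω ≃ₜ Ω')
    -- (b) domains with the same `Ψ`-image are disjoint
    (hdisj : ∀ g g', g ≠ g' → Ψ g = Ψ g' → θ.dom g ∩ θ.dom g' = ∅)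
    -- (c) `Ω'_h = ⋃_{Ψ(g) = h} φ(Ω_g)`
    (hcover : ∀ h : H, θ'.dom h = ⋃ g ∈ {g | Ψ g = h}, φ '' θ.dom g)
    -- `φ` is `Ψ`-equivariant
    (hequiv₁ : ∀ g, φ '' θ.dom g ⊆ θ'.dom (Ψ g))
    (hequiv₂ : ∀ g, ∀ x ∈ θ.dom g⁻¹, φ (θ.act g x) = θ'.act (Ψ g) (φ x)) :
    ∃ (a : G → Ω → H) (b : H → Ω' → G),
      -- the concrete choice of `a`
      (∀ g, ∀ x ∈ θ.dom g⁻¹, a g x = Ψ g) ∧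
      -- the concrete (unique-choice) property of `b`
      (∀ h, ∀ y ∈ θ'.dom h⁻¹, Ψ (b h y) = h ∧ φ.symm y ∈ θ.dom (b h y)⁻¹) ∧
      -- (1)
      (∀ g, ∀ x ∈ θ.dom g⁻¹, φ x ∈ θ'.dom (a g x)⁻¹ ∧
        φ (θ.act g x) = θ'.act (a g x) (φ x)) ∧
      -- (2)
      (∀ h, ∀ y ∈ θ'.dom h⁻¹, φ.symm y ∈ θ.dom (b h y)⁻¹ ∧
        φ.symm (θ'.act h y) = θ.act (b h y) (φ.symm y)) ∧
      -- (3)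
      (∀ g, ∀ x ∈ θ.dom g⁻¹, b (a g x) (φ x) = g) ∧
      (∀ h, ∀ y ∈ θ'.dom h⁻¹, a (b h y) (φ.symm y) = h) ∧
      -- (4)
      (∀ g g', ∀ x ∈ θ.dom g⁻¹, θ.act g x ∈ θ.dom g'⁻¹ →
        a (g' * g) x = a g' (θ.act g x) * a g x) ∧
      -- (5)
      (∀ h h', ∀ y ∈ θ'.dom h⁻¹, θ'.act h y ∈ θ'.dom h'⁻¹ →
        b (h' * h) y = b h' (θ'.act h y) * b h y) := by
  classical
  -- uniqueness of g with Ψ g = h and x ∈ dom g⁻¹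
  have huniq : ∀ g g' (x : Ω), Ψ g = Ψ g' → x ∈ θ.dom g⁻¹ → x ∈ θ.dom g'⁻¹ → g = g' := by
    intro g g' x hΨ hx hx'
    by_contra hne
    have h := hdisj g⁻¹ g'⁻¹ (fun e => hne (inv_injective e)) (by simp [hΨ])
    exact absurd (Set.mem_inter hx hx') (by simp [h])
  set a : G → Ω → H := fun g _ => Ψ g with ha
  have hbex : ∀ h (y : Ω'), y ∈ θ'.dom h⁻¹ → ∃ g, Ψ g = h ∧ φ.symm y ∈ θ.dom g⁻¹ := by
    intro h y hy
    rw [hcover] at hy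
    simp only [Set.mem_iUnion, Set.mem_setOf_eq] at hy
    obtain ⟨g, hg, x, hx, rfl⟩ := hy
    refine ⟨g⁻¹, by rw [map_inv, hg, inv_inv], by simpa using hx⟩
  set b : H → Ω' → G := fun h y =>
    if hx : ∃ g, Ψ g = h ∧ φ.symm y ∈ θ.dom g⁻¹ then hx.choose else 1 with hb
  have hbspec : ∀ h, ∀ y ∈ θ'.dom h⁻¹, Ψ (b h y) = h ∧ φ.symm y ∈ θ.dom (b h y)⁻¹ := by
    intro h y hy
    have hex := hbex h y hy
    simp only [hb, dif_pos hex]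
    exact hex.choose_spec
  -- uniqueness applied to b
  have hbuniq : ∀ h y g, Ψ g = h → φ.symm y ∈ θ.dom g⁻¹ → y ∈ θ'.dom h⁻¹ → b h y = g := by
    intro h y g hΨ hx hy
    obtain ⟨h1, h2⟩ := hbspec h y hy
    exact huniq _ _ _ (by rw [h1, hΨ]) h2 hx
  -- condition (1)
  have h1 : ∀ g, ∀ x ∈ θ.dom g⁻¹, φ x ∈ θ'.dom (a g x)⁻¹ ∧
      φ (θ.act g x) = θ'.act (a g x) (φ x) := by
    intro g x hx
    refine ⟨?_, hequiv₂ g x hx⟩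
    have := hequiv₁ g⁻¹ ⟨x, hx, rfl⟩
    simpa using this
  refine ⟨a, b, fun _ _ _ => rfl, hbspec, h1, ?_, ?_, ?_, ?_, ?_⟩
  · -- (2)
    intro h y hy
    obtain ⟨hΨ, hx⟩ := hbspec h y hy
    refine ⟨hx, ?_⟩
    have := hequiv₂ (b h y) (φ.symm y) hx
    rw [hΨ] at this
    simp only [Homeomorph.apply_symm_apply] at this
    rw [← this]; simp
  · -- (3a)
    intro g x hx
    refine hbuniq _ _ g rfl (by simpa using hx) (h1 g x hx).1
  · -- (3b)
    intro h y hy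
    exact (hbspec h y hy).1
  · -- (4)
    intro g g' x hx hx'
    simp [ha]
  · -- (5)
    intro h h' y hy hy'
    obtain ⟨hΨ, hx⟩ := hbspec h y hy
    obtain ⟨hΨ', hx'⟩ := hbspec h' (θ'.act h y) hy'
    set g := b h y
    set g' := b h' (θ'.act h y)
    have key : φ.symm (θ'.act h y) = θ.act g (φ.symm y) := by
      have := hequiv₂ g (φ.symm y) hx
      rw [hΨ] at this
      simp only [Homeomorph.apply_symm_apply] at this
      rw [← this]; simp
    have hact : θ.act g (φ.symm y) ∈ θ.dom g'⁻¹ := key ▸ hx'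
    have hmul := θ.act_mul g' g (φ.symm y) hx hact
    have hy2 := (θ'.act_mul h' h y hy hy').1
    exact hbuniq _ _ (g' * g) (by rw [map_mul, hΨ, hΨ']) hmul.1 hy2
end

section
/- If two partial actions θ : G ↷ Ω and θ' : H ↷ Ω' (on the same space, with φ = id, i.e. given by data a(g,x), b(h,y) witnessing dynamical equivalence) are dynamically equivalent, then there exists a partial action γ of G × H on Ω, with domains Ω_{(g,h)} = {x ∈ Ω_g : a(g^{-1},x) = h^{-1}} = {x ∈ Ω_h : b(h^{-1},x) = g^{-1}} and action (g,h).x = g.x = h.x, such that the projections onto G and H together with the identity map give direct dynamical equivalences from γ to θ and from γ to θ'. -/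
theorem stmt4 {G H Ω : Type*} [Group G] [Group H] [TopologicalSpace Ω]
    (θ : PartialAction G Ω) (θ' : PartialAction H Ω)
    (a : G → Ω → H) (b : H → Ω → G)
    -- conditions (1)-(5) of dynamical equivalence, with `φ = id`
    (h1 : ∀ g, ∀ x ∈ θ.dom g⁻¹,
      x ∈ θ'.dom (a g x)⁻¹ ∧ θ.act g x = θ'.act (a g x) x)
    (h2 : ∀ h, ∀ y ∈ θ'.dom h⁻¹,
      y ∈ θ.dom (b h y)⁻¹ ∧ θ'.act h y = θ.act (b h y) y)
    (h3 : ∀ g, ∀ x ∈ θ.dom g⁻¹, b (a g x) x = g)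
    (h3' : ∀ h, ∀ y ∈ θ'.dom h⁻¹, a (b h y) y = h)
    (h4 : ∀ g g', ∀ x ∈ θ.dom g⁻¹, θ.act g x ∈ θ.dom g'⁻¹ →
      a (g' * g) x = a g' (θ.act g x) * a g x)
    (h5 : ∀ h h', ∀ y ∈ θ'.dom h⁻¹, θ'.act h y ∈ θ'.dom h'⁻¹ →
      b (h' * h) y = b h' (θ'.act h y) * b h y) :
    ∃ γ : PartialAction (G × H) Ω,
      -- the domains of `γ`
      (∀ g h, γ.dom (g, h) = {x | x ∈ θ.dom g ∧ a g⁻¹ x = h⁻¹}) ∧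
      (∀ g h, γ.dom (g, h) = {x | x ∈ θ'.dom h ∧ b h⁻¹ x = g⁻¹}) ∧
      -- the action of `γ`: `(g,h).x = g.x = h.x`
      (∀ g h, ∀ x ∈ γ.dom (g, h)⁻¹,
        γ.act (g, h) x = θ.act g x ∧ γ.act (g, h) x = θ'.act h x) ∧
      -- `(id, π_G)` is a direct dynamical equivalence `γ → θ`
      (∀ p p' : G × H, p ≠ p' → p.1 = p'.1 → γ.dom p ∩ γ.dom p' = ∅) ∧
      (∀ g : G, θ.dom g = ⋃ h : H, γ.dom (g, h)) ∧
      -- `(id, π_H)` is a direct dynamical equivalence `γ → θ'`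
      (∀ p p' : G × H, p ≠ p' → p.2 = p'.2 → γ.dom p ∩ γ.dom p' = ∅) ∧
      (∀ h : H, θ'.dom h = ⋃ g : G, γ.dom (g, h)) := by
  -- a 1 x = 1
  have ha1 : ∀ x : Ω, a 1 x = 1 := by
    intro x
    have hx : x ∈ θ.dom (1:G)⁻¹ := by simp [θ.dom_one]
    have h := h4 1 1 x hx (by simpa [θ.act_one] using hx)
    rw [θ.act_one, one_mul] at h
    exact mul_eq_left.mp h.symm
  -- key: the two descriptions of the domains agree
  have key : ∀ (g : G) (h : H),
      {x | x ∈ θ.dom g ∧ a g⁻¹ x = h⁻¹} = {x | x ∈ θ'.dom h ∧ b h⁻¹ x = g⁻¹} := by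
    intro g h
    ext x
    constructor
    · rintro ⟨hx, hax⟩
      have hx' : x ∈ θ.dom g⁻¹⁻¹ := by simpa using hx
      have e1 := h1 g⁻¹ x hx'
      have e3 := h3 g⁻¹ x hx'
      rw [hax] at e1 e3
      exact ⟨by simpa using e1.1, e3⟩
    · rintro ⟨hx, hbx⟩
      have hx' : x ∈ θ'.dom h⁻¹⁻¹ := by simpa using hx
      have e2 := h2 h⁻¹ x hx'
      have e3 := h3' h⁻¹ x hx'
      rw [hbx] at e2 e3
      exact ⟨by simpa using e2.1, e3⟩
  refine ⟨{
    dom := fun p => {x | x ∈ θ.dom p.1 ∧ a p.1⁻¹ x = p.2⁻¹}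
    act := fun p x => θ.act p.1 x
    dom_one := by
      ext x
      simp [θ.dom_one, ha1]
    act_one := fun x => θ.act_one x
    mapsTo := by
      rintro ⟨g, h⟩ x ⟨hx, hax⟩
      simp only [Prod.fst_inv, Prod.snd_inv, inv_inv] at hx hax
      have hgx : θ.act g x ∈ θ.dom g := θ.mapsTo g hx
      have h4' := h4 g g⁻¹ x hx (by simpa using hgx)
      rw [inv_mul_cancel, ha1, hax] at h4'
      exact ⟨hgx, eq_inv_of_mul_eq_one_left h4'.symm⟩
    act_inv := by
      rintro ⟨g, h⟩ x ⟨hx, hax⟩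
      simp only [Prod.fst_inv, Prod.snd_inv, inv_inv] at hx hax
      exact θ.act_inv g x hx
    act_mul := by
      rintro ⟨g', h'⟩ ⟨g, h⟩ x ⟨hx, hax⟩ ⟨hgx, hax'⟩
      simp only [Prod.fst_inv, Prod.snd_inv, inv_inv] at hx hax hgx hax'
      have hm := θ.act_mul g' g x hx hgx
      have h4' := h4 g g' x hx hgx
      rw [hax, hax'] at h4'
      refine ⟨⟨by simpa using hm.1, ?_⟩, hm.2⟩
      simp only [Prod.mk_mul_mk, Prod.fst_inv, Prod.snd_inv, inv_inv]
      exact h4'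
  }, fun g h => rfl, fun g h => key g h, ?_, ?_, ?_, ?_, ?_⟩
  · rintro g h x ⟨hx, hax⟩
    simp only [Prod.fst_inv, Prod.snd_inv, inv_inv, Set.mem_setOf_eq] at hx hax
    refine ⟨rfl, ?_⟩
    have := (h1 g x hx).2
    rw [hax] at this
    exact this
  · rintro ⟨g, h⟩ ⟨g', h'⟩ hne hfst
    ext x
    simp only [Set.mem_inter_iff, Set.mem_setOf_eq, Set.mem_empty_iff_false, iff_false]
    rintro ⟨⟨hx1, hx2⟩, ⟨hx3, hx4⟩⟩
    simp only at hfst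
    subst hfst
    rw [hx2] at hx4
    exact hne (by rw [Prod.mk.injEq]; exact ⟨rfl, by simpa using hx4⟩)
  · intro g
    ext x
    simp only [Set.mem_iUnion, Set.mem_setOf_eq]
    constructor
    · intro hx
      exact ⟨(a g⁻¹ x)⁻¹, hx, by rw [inv_inv]⟩
    · rintro ⟨h, hx, _⟩; exact hx
  · rintro ⟨g, h⟩ ⟨g', h'⟩ hne hsnd
    have e1 := key g h
    have e2 := key g' h'
    ext x
    simp only [Set.mem_inter_iff, Set.mem_empty_iff_false, iff_false]
    intro hmem
    rw [e1] at hmem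
    have hmem2 := hmem.2
    rw [e2] at hmem2
    simp only at hsnd
    subst hsnd
    rw [Set.mem_setOf_eq] at hmem2
    have := hmem.1.2
    rw [this] at hmem2
    exact hne (by rw [Prod.mk.injEq]; exact ⟨by simpa using hmem2.2, rfl⟩)
  · intro h
    ext x
    simp only [Set.mem_iUnion]
    constructor
    · intro hx
      refine ⟨(b h⁻¹ x)⁻¹, ?_⟩
      rw [key]
      exact ⟨hx, by rw [inv_inv]⟩
    · rintro ⟨g, hx⟩
      rw [key] at hx
      exact hx.1
end

section
/- Let ξ ∈ C(A) and n < R. Then the R-ball of ξ can be recovered from the (R−n)-ball of its n-ball recoding: ξ^R = ⋃_{β ∈ φ_n(ξ)^{R−n}} Ψ̃_n(β), where for β = [B_m ← s_m ← B_{m−1}]⋯[B_1 ← s_1 ← B_0] one sets Ψ̃_n(β) = ⋃_{k=0}^m (s_k⋯s_1)^{-1}.B_k. -/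
/-- The alphabet `A^{[n]}` of formal symbols `[B ← a ← B']` of the `n`-ball
recoding (the ball radius being fixed, a symbol is determined by the two
balls and the letter). -/
abbrev BSym (A : Type) : Type := Set (FreeGroup A) × A × Set (FreeGroup A)

noncomputable instance (A : Type) : DecidableEq (BSym A) := Classical.decEq _

/-- `s_k ⋯ s_1`, the product of the last `k` letters of the word `L`. -/
def sufProd {A : Type} (L : List (A × Bool)) (k : ℕ) : FreeGroup A :=
  FreeGroup.mk (L.drop (L.length - k))

/-- The recoding `φ_n(ξ, α) = [B_m ← s_m ← B_{m−1}] ⋯ [B_1 ← s_1 ← B_0]`,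
where `α = s_m ⋯ s_1` (reduced) and `B_k = ((s_k ⋯ s_1).ξ)^n`; a negative
letter `s = a⁻¹` contributes the inverse symbol `[B' ← a⁻¹ ← B] = [B ← a ← B']⁻¹`. -/
noncomputable def phiEl {A : Type} [DecidableEq A] (n : ℕ)
    (ξ : Set (FreeGroup A)) (α : FreeGroup A) : FreeGroup (BSym A) :=
  FreeGroup.mk <| α.toWord.mapIdx fun i s =>
    let m := α.toWord.length
    let Bup := ball n (tr (sufProd α.toWord (m - i)) ξ)
    let Bdown := ball n (tr (sufProd α.toWord (m - i - 1)) ξ)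
    if s.2 then ((Bup, s.1, Bdown), true) else ((Bdown, s.1, Bup), false)

/-- `φ_n(ξ) = {φ_n(ξ, α) : α ∈ ξ}`. -/
noncomputable def phiSet {A : Type} [DecidableEq A] (n : ℕ)
    (ξ : Set (FreeGroup A)) : Set (FreeGroup (BSym A)) :=
  {x | ∃ α ∈ ξ, x = phiEl n ξ α}

/-- `Ψ̃_n(φ_n(ξ, α)) = ⋃_{k=0}^m (s_k ⋯ s_1)⁻¹.B_k`, where
`g.B = B · g⁻¹`. -/
noncomputable def tildePsi {A : Type} [DecidableEq A] (n : ℕ)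
    (ξ : Set (FreeGroup A)) (α : FreeGroup A) : Set (FreeGroup A) :=
  ⋃ k ∈ Finset.range (α.toWord.length + 1),
    tr (sufProd α.toWord k)⁻¹ (ball n (tr (sufProd α.toWord k) ξ))


section Helpers
open FreeGroup List
variable {A : Type} [DecidableEq A]


lemma red_of_chain' : ∀ {L : List (A × Bool)},
    (L.Chain' fun a b => ¬(a.1 = b.1 ∧ a.2 = !b.2)) → FreeGroup.reduce L = L
  | [], _ => rfl
  | [x], _ => rfl
  | x :: y :: L, h => by
    rw [List.Chain', List.isChain_cons_cons] at h
    have ih := red_of_chain' h.2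
    rw [FreeGroup.reduce.cons, ih]
    exact if_neg h.1

lemma chain'_of_red {L : List (A × Bool)} (h : FreeGroup.reduce L = L) :
    L.Chain' fun a b => ¬(a.1 = b.1 ∧ a.2 = !b.2) := by
  rw [List.Chain', List.isChain_iff_getElem]
  intro i hi
  intro hc
  have hi1 : i + 1 < L.length := by omega
  have hi0 : i < L.length := by omega
  have h2 : L[i+1] = (L[i].1, !L[i].2) := by
    obtain ⟨h1, h2⟩ := hc
    ext
    · exact h1.symm
    · rw [h2, Bool.not_not]
  have hdecomp : L = L.take i ++ L[i] :: (L[i].1, !L[i].2) :: L.drop (i + 2) := by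
    conv_lhs => rw [← List.take_append_drop i L]
    congr 1
    rw [List.drop_eq_getElem_cons hi0, List.drop_eq_getElem_cons hi1, ← h2]
  have hstep : FreeGroup.Red.Step L (L.take i ++ L.drop (i + 2)) := by
    conv_lhs => rw [hdecomp]
    exact FreeGroup.Red.Step.not
  have := FreeGroup.Red.length_le (FreeGroup.reduce.red (L := L.take i ++ L.drop (i+2)))
  rw [← FreeGroup.reduce.Step.eq hstep, h] at this
  simp only [List.length_append, List.length_take, List.length_drop] at this
  omega

lemma reduce_drop {L : List (A × Bool)} (h : FreeGroup.reduce L = L) (j : ℕ) :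
    FreeGroup.reduce (L.drop j) = L.drop j :=
  red_of_chain' ((chain'_of_red h).drop j)

lemma reduce_take {L : List (A × Bool)} (h : FreeGroup.reduce L = L) (j : ℕ) :
    FreeGroup.reduce (L.take j) = L.take j :=
  red_of_chain' ((chain'_of_red h).take j)

lemma norm_mk_drop (x : FreeGroup A) (j : ℕ) :
    (FreeGroup.mk (x.toWord.drop j)).norm = x.toWord.length - j := by
  rw [FreeGroup.norm, FreeGroup.toWord_mk, reduce_drop (FreeGroup.reduce_toWord x),
    List.length_drop]

lemma norm_mk_take (x : FreeGroup A) (j : ℕ) :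
    (FreeGroup.mk (x.toWord.take j)).norm = min j x.toWord.length := by
  rw [FreeGroup.norm, FreeGroup.toWord_mk, reduce_take (FreeGroup.reduce_toWord x),
    List.length_take]

lemma toWord_mk_drop (x : FreeGroup A) (j : ℕ) :
    (FreeGroup.mk (x.toWord.drop j)).toWord = x.toWord.drop j := by
  rw [FreeGroup.toWord_mk, reduce_drop (FreeGroup.reduce_toWord x)]

lemma norm_map_le {B : Type} [DecidableEq B] (f : A → B) (x : FreeGroup A) :
    (FreeGroup.map f x).norm ≤ x.norm := by
  conv_lhs => rw [← FreeGroup.mk_toWord (x := x), FreeGroup.map.mk]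
  exact (FreeGroup.norm_mk_le).trans (by simp [FreeGroup.norm])

lemma phi_proj (n : ℕ) (ξ : Set (FreeGroup A)) (α : FreeGroup A) :
    FreeGroup.map (fun s : BSym A => s.2.1) (phiEl n ξ α) = α := by
  rw [phiEl, FreeGroup.map.mk]
  conv_rhs => rw [← FreeGroup.mk_toWord (x := α)]
  congr 1
  apply List.ext_get
  · simp
  · intro i h1 h2
    simp only [List.get_eq_getElem, List.getElem_map]
    rw [List.getElem_mapIdx]
    rcases hs : α.toWord[i] with ⟨a, b⟩
    cases b <;> simp

lemma norm_phi_le (n : ℕ) (ξ : Set (FreeGroup A)) (α : FreeGroup A) :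
    (phiEl n ξ α).norm ≤ α.norm := by
  refine (FreeGroup.norm_mk_le).trans ?_
  simp [FreeGroup.norm]

lemma norm_le_norm_phi (n : ℕ) (ξ : Set (FreeGroup A)) (α : FreeGroup A) :
    α.norm ≤ (phiEl n ξ α).norm := by
  conv_lhs => rw [← phi_proj n ξ α]
  exact norm_map_le _ _

end Helpers

theorem stmt5 (A : Type) [Fintype A] [DecidableEq A]
    (ξ : Set (FreeGroup A)) (hξ : ConvexCfg ξ) (n R : ℕ) (h : n < R) :
    ball R ξ =
      {γ | ∃ α ∈ ξ, (phiEl n ξ α).norm ≤ R - n ∧ γ ∈ tildePsi n ξ α} := by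
  obtain ⟨-, hconv⟩ := hξ
  ext γ
  simp only [ball, Set.mem_setOf_eq]
  constructor
  · rintro ⟨hγξ, hγR⟩
    have hγR' : γ.toWord.length ≤ R := hγR
    set k := min γ.toWord.length (R - n) with hk
    set j := γ.toWord.length - k with hj
    set α := FreeGroup.mk (γ.toWord.drop j) with hα
    have hsplit : FreeGroup.mk (γ.toWord.take j) * α = γ := by
      rw [hα, FreeGroup.mul_mk, List.take_append_drop, FreeGroup.mk_toWord]
    have hnormγ : γ.norm = γ.toWord.length := rfl
    have hnormα : α.norm = k := by rw [hα, norm_mk_drop]; omega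
    have hαξ : α ∈ ξ := by
      refine hconv _ _ (by rw [hsplit]; exact hγξ) ?_
      rw [hsplit, hnormγ, hnormα, norm_mk_take]; omega
    have hαw : α.toWord = γ.toWord.drop j := by rw [hα]; exact toWord_mk_drop γ j
    have hlen : α.toWord.length = k := by rw [hαw, List.length_drop]; omega
    refine ⟨α, hαξ, ?_, ?_⟩
    · refine (norm_phi_le n ξ α).trans ?_
      rw [hnormα]; omega
    · rw [tildePsi, Set.mem_iUnion₂]
      refine ⟨k, by simp [hlen], ?_⟩
      have hsuf : sufProd α.toWord k = α := by
        rw [sufProd, hlen, Nat.sub_self, List.drop_zero, FreeGroup.mk_toWord]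
      rw [hsuf, tr]
      have htop : FreeGroup.mk (γ.toWord.take j) = γ * α⁻¹ :=
        eq_mul_inv_of_mul_eq hsplit
      refine ⟨γ * α⁻¹, ⟨⟨γ, hγξ, rfl⟩, ?_⟩, by group⟩
      rw [← htop, norm_mk_take]; omega
  · rintro ⟨α, hαξ, hφ, hψ⟩
    rw [tildePsi, Set.mem_iUnion₂] at hψ
    obtain ⟨k, -, hγ⟩ := hψ
    simp only [tr, ball, Set.mem_image, Set.mem_setOf_eq] at hγ
    obtain ⟨β, ⟨⟨x, hx, hxβ⟩, hβn⟩, hβγ⟩ := hγ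
    have hγβ : γ = β * sufProd α.toWord k := by rw [← hβγ]; group
    have hγx : γ = x := by rw [hγβ, ← hxβ]; group
    have hnormg : (sufProd α.toWord k).norm ≤ α.norm := by
      rw [sufProd]
      refine FreeGroup.norm_mk_le.trans ?_
      simp [FreeGroup.norm]
    have hαn : α.norm ≤ R - n := (norm_le_norm_phi n ξ α).trans hφ
    refine ⟨by rw [hγx]; exact hx, ?_⟩
    have hmul := FreeGroup.norm_mul_le β (sufProd α.toWord k)
    rw [← hγβ] at hmul
    omega
end

section
/- Let (E,C) be a finite bipartite separated graph with C_u = {X_1^u,…,X_{k_u}^u} for u ∈ E^{0,0}, and let H ⊆ E^0 be hereditary and C-saturated. Define H_1 = {s_1(X(x)) : x ∈ E^1, s(x) ∈ H} ∪ (H ∩ E_1^{0,0}) ⊆ E_1^0, where (E_1,C^1) is the 1-graph of (E,C). Then H_1 is hereditary and C^1-saturated in (E_1,C^1), and H ∪ H_1 is the hereditary closure of H inside (F_1,D^1) = (E,C) ∪ (E_1,C^1). -/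
/-!
STATEMENT 8: For a finite bipartite separated graph `(E,C)` and a hereditary
`C`-saturated `H ⊆ E^0`, the set
`H_1 = {s_1(X(x)) : x ∈ E^1, s(x) ∈ H} ∪ (H ∩ E_1^{0,0})` is hereditary and
`C^1`-saturated in the `1`-graph `(E_1, C^1)`, and `H ∪ H_1` is the
hereditary closure of `H` inside `(F_1, D^1) = (E,C) ∪ (E_1,C^1)` and is
moreover `D^1`-saturated.
-/

/-- A bipartite separated graph: edges go from the layer `V1 = E^{0,1}`
(sources) to the layer `V0 = E^{0,0}` (ranges), and `C v` is the partition
of `r⁻¹(v)` for `v ∈ V0`. -/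
structure BipSepGraph : Type 1 where
  V0 : Type
  V1 : Type
  E : Type
  r : E → V0
  s : E → V1
  C : V0 → Set (Set E)

namespace BipSepGraph

/-- The separated-graph axioms: the members of each `C v` are non-empty
subsets of `r⁻¹(v)` forming a partition of it. -/
def IsSep (G : BipSepGraph) : Prop :=
  (∀ v, ∀ X ∈ G.C v, X.Nonempty) ∧
  (∀ v, ∀ X ∈ G.C v, ∀ x ∈ X, G.r x = v) ∧
  (∀ e, ∃ X ∈ G.C (G.r e), e ∈ X) ∧
  (∀ v, ∀ X ∈ G.C v, ∀ Y ∈ G.C v, (X ∩ Y).Nonempty → X = Y)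

/-- The vertices `v(x_1, …, x_{k_u})` of `E_1^{0,1}`: a vertex `u ∈ E^{0,0}`
together with a choice of one edge from each `X ∈ C_u`. -/
def Choice (G : BipSepGraph) : Type :=
  Σ v : G.V0, {f : {X : Set G.E // X ∈ G.C v} → G.E // ∀ X, f X ∈ X.1}

/-- The `1`-graph `(E_1, C^1)` of a bipartite separated graph. The edge
`α^{x_i}(x_1, …, x̂_i, …, x_{k_u})` is encoded as the pair of the choice
vertex `v(x_1, …, x_{k_u})` and the distinguished coordinate `X_i`. -/
def next (G : BipSepGraph) : BipSepGraph where
  V0 := G.V1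
  V1 := Choice G
  E := Σ c : Choice G, {X : Set G.E // X ∈ G.C c.1}
  r := fun e => G.s (e.1.2.1 e.2)
  s := fun e => e.1
  C := fun w => {S | ∃ x : G.E, G.s x = w ∧ S = {e | e.1.2.1 e.2 = x}}

/-- Hereditariness for a bipartite separated graph, for a subset of
`E^0 = V0 ⊔ V1` given by its two layers. -/
def Hered (G : BipSepGraph) (H0 : Set G.V0) (H1 : Set G.V1) : Prop :=
  ∀ e, G.r e ∈ H0 → G.s e ∈ H1

/-- `C`-saturation. -/
def Sat (G : BipSepGraph) (H0 : Set G.V0) (H1 : Set G.V1) : Prop :=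
  ∀ v, ∀ X ∈ G.C v, (∀ x ∈ X, G.s x ∈ H1) → v ∈ H0

end BipSepGraph

open BipSepGraph

theorem stmt8 (G : BipSepGraph) (hsep : G.IsSep)
    (hV0 : Finite G.V0) (hV1 : Finite G.V1) (hE : Finite G.E)
    (H0 : Set G.V0) (H1 : Set G.V1)
    (hher : Hered G H0 H1) (hsat : Sat G H0 H1) :
    -- `H_1` : its `E_1^{0,0}`-layer is `H ∩ E_1^{0,0} = H1`, and its
    -- `E_1^{0,1}`-layer consists of the sources `s_1(X(x))` of the groups
    -- `X(x)` with `x ∈ E^1`, `s(x) ∈ H`, i.e. the choice vertices choosing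
    -- some edge whose source lies in `H`.
    (Hered (next G) H1
        {c : Choice G | ∃ X : {X : Set G.E // X ∈ G.C c.1},
            G.s (c.2.1 X) ∈ H1} ∧
      Sat (next G) H1
        {c : Choice G | ∃ X : {X : Set G.E // X ∈ G.C c.1},
            G.s (c.2.1 X) ∈ H1}) ∧
    -- `H ∪ H_1` is hereditary and `D^1`-saturated in `(F_1, D^1)`, and is
    -- the hereditary closure of `H` there.  Here `(F_1, D^1)` has vertices
    -- `V0 ⊔ V1 ⊔ Choice G` and edges `E ⊔ E_1`; membership of `H ∪ H_1` in
    -- the three layers is `H0`, `H1`, `Hc` respectively, with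
    -- `Hc = {c | ∃ X, s(c X) ∈ H1}`.
    (let Hc : Set (Choice G) :=
        {c | ∃ X : {X : Set G.E // X ∈ G.C c.1}, G.s (c.2.1 X) ∈ H1}
     -- hereditary for both kinds of edges of `F_1`
     ((∀ e : G.E, G.r e ∈ H0 → G.s e ∈ H1) ∧
        (∀ e : (next G).E, (next G).r e ∈ H1 → (next G).s e ∈ Hc)) ∧
     -- `D^1`-saturated at both kinds of vertices admitting groups
     ((∀ v, ∀ X ∈ G.C v, (∀ x ∈ X, G.s x ∈ H1) → v ∈ H0) ∧
        (∀ w, ∀ S ∈ (next G).C w, (∀ e ∈ S, (next G).s e ∈ Hc) → w ∈ H1)) ∧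
     -- minimality: it is the hereditary closure of `H` inside `(F_1, D^1)`
     (∀ (K0 : Set G.V0) (K1 : Set G.V1) (Kc : Set (Choice G)),
        (∀ e : G.E, G.r e ∈ K0 → G.s e ∈ K1) →
        (∀ e : (next G).E, (next G).r e ∈ K1 → (next G).s e ∈ Kc) →
        H0 ⊆ K0 → H1 ⊆ K1 → Hc ⊆ Kc)) := by
 classical
  have hered1 : ∀ e : (next G).E, (next G).r e ∈ H1 →
      (next G).s e ∈ {c : Choice G | ∃ X : {X : Set G.E // X ∈ G.C c.1},
        G.s (c.2.1 X) ∈ H1} := fun e he => ⟨e.2, he⟩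
  have sat1 : ∀ w, ∀ S ∈ (next G).C w,
      (∀ e ∈ S, (next G).s e ∈ {c : Choice G |
        ∃ X : {X : Set G.E // X ∈ G.C c.1}, G.s (c.2.1 X) ∈ H1}) → w ∈ H1 := by
    rintro w S ⟨x, hx, rfl⟩ hall
    obtain ⟨X₀, hX₀, hxX₀⟩ := hsep.2.2.1 x
    by_cases hY : ∃ Y, ∃ _ : Y ∈ G.C (G.r x), ∀ y ∈ Y, G.s y ∈ H1
    · obtain ⟨Y, hYC, hall'⟩ := hY
      exact hx ▸ hher x (hsat _ Y hYC hall')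
    · push_neg at hY
      choose y hy hys using hY
      have hf : ∀ X : {X : Set G.E // X ∈ G.C (G.r x)},
          (if X.1 = X₀ then x else y X.1 X.2) ∈ X.1 := by
        intro X
        by_cases h : X.1 = X₀
        · simp [h, hxX₀]
        · simp [h, hy]
      set c : Choice G := ⟨G.r x, ⟨fun X => if X.1 = X₀ then x else y X.1 X.2, hf⟩⟩
      have hmem : (⟨c, ⟨X₀, hX₀⟩⟩ : (next G).E) ∈
          {e : (next G).E | e.1.2.1 e.2 = x} := by
        show (if X₀ = X₀ then x else _) = x
        simp
      obtain ⟨X, hX'⟩ := hall _ hmem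
      have hX : G.s (c.2.1 X) ∈ H1 := hX'
      by_cases h : X.1 = X₀
      · have : c.2.1 X = x := by simp [c, h]
        rw [this] at hX
        exact hx ▸ hX
      · have : c.2.1 X = y X.1 X.2 := by simp [c, h]
        rw [this] at hX
        exact absurd hX (hys X.1 X.2)
  refine ⟨⟨hered1, sat1⟩, ⟨hher, hered1⟩, ⟨hsat, sat1⟩, ?_⟩
  intro K0 K1 Kc hk1 hk2 h0 h1 c hc
  obtain ⟨X, hX⟩ := hc
  exact hk2 ⟨c, X⟩ (h1 hX)
end

section
/- Let (E,C) be a simple finite bipartite separated graph (i.e. the only hereditary D^∞-saturated subsets of (F_∞,D^∞) are trivial). Then for every vertex v ∈ F_∞^0 there is at most one X ∈ D^∞_v with |X| > 1. -/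
namespace BipSepGraph

/-- The iterated `1`-graphs `(E_n, C^n)`. -/
def lvl (G : BipSepGraph) : ℕ → BipSepGraph
  | 0 => G
  | n + 1 => next (lvl G n)

/-- The vertices of `(F_∞, D^∞)`: the `n`-th layer is `E_n^{0,0}`. -/
def FV (G : BipSepGraph) : Type := Σ n : ℕ, (lvl G n).V0

/-- The edges of `(F_∞, D^∞)`. -/
def FE (G : BipSepGraph) : Type := Σ n : ℕ, (lvl G n).E

/-- Range map of `(F_∞, D^∞)`. -/
def Fr (G : BipSepGraph) : FE G → FV G := fun e => ⟨e.1, (lvl G e.1).r e.2⟩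

/-- Source map of `(F_∞, D^∞)` (using `(E_n)^{0,1} = (E_{n+1})^{0,0}`). -/
def Fs (G : BipSepGraph) : FE G → FV G := fun e => ⟨e.1 + 1, (lvl G e.1).s e.2⟩

/-- The separation `D^∞` of `(F_∞, D^∞)`. -/
def DInf (G : BipSepGraph) : FV G → Set (Set (FE G)) := fun p =>
  {S | ∃ X ∈ (lvl G p.1).C p.2, S = (fun e => (⟨p.1, e⟩ : FE G)) '' X}

/-- Hereditariness in `(F_∞, D^∞)`. -/
def HeredInf (G : BipSepGraph) (H : Set (FV G)) : Prop :=
  ∀ e : FE G, Fr G e ∈ H → Fs G e ∈ H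

/-- `D^∞`-saturation. -/
def SatInf (G : BipSepGraph) (H : Set (FV G)) : Prop :=
  ∀ p : FV G, ∀ S ∈ DInf G p, (∀ e ∈ S, Fs G e ∈ H) → p ∈ H

/-- The `E_n^{0,0}`-part of `H ∩ E_n^0`. -/
def layer0 (G : BipSepGraph) (H : Set (FV G)) (n : ℕ) : Set (lvl G n).V0 :=
  {v | (⟨n, v⟩ : FV G) ∈ H}

/-- The `E_n^{0,1}`-part of `H ∩ E_n^0`. -/
def layer1 (G : BipSepGraph) (H : Set (FV G)) (n : ℕ) : Set (lvl G n).V1 :=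
  {w | (⟨n + 1, w⟩ : FV G) ∈ H}

end BipSepGraph

/-!
STATEMENT 12: If `(E,C)` is a simple finite bipartite separated graph (the
only hereditary `D^∞`-saturated subsets of `(F_∞, D^∞)` are trivial), then
for every vertex `v ∈ F_∞^0` there is at most one `X ∈ D^∞_v` with
`|X| > 1`.
-/

namespace BipSepGraph

noncomputable def pickf (B : BipSepGraph) (hB : B.IsSep) (v : B.V0) :
    {f : {X : Set B.E // X ∈ B.C v} → B.E // ∀ X, f X ∈ X.1} :=
  ⟨fun X => (hB.1 v X.1 X.2).choose, fun X => (hB.1 v X.1 X.2).choose_spec⟩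

open Classical in
noncomputable def thru (B : BipSepGraph) (hB : B.IsSep) (v : B.V0)
    (x : B.E) (Z : Set B.E) (hx : x ∈ Z) :
    {f : {X : Set B.E // X ∈ B.C v} → B.E // ∀ X, f X ∈ X.1} :=
  ⟨fun X => if h : X.1 = Z then x else (B.pickf hB v).1 X,
   fun X => by
     dsimp only
     split
     · next h => rw [h]; exact hx
     · exact (B.pickf hB v).2 X⟩

theorem nextIsSep (B : BipSepGraph) (hB : B.IsSep) : (next B).IsSep := by
  refine ⟨?_, ?_, ?_, ?_⟩
  · rintro u S ⟨x, hxu, rfl⟩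
    obtain ⟨Z, hZ, hxZ⟩ := hB.2.2.1 x
    refine ⟨⟨⟨B.r x, B.thru hB (B.r x) x Z hxZ⟩, ⟨Z, hZ⟩⟩, ?_⟩
    show (B.thru hB (B.r x) x Z hxZ).1 ⟨Z, hZ⟩ = x
    simp [thru]
  · rintro u S ⟨x, hxu, rfl⟩ e he
    show B.s (e.1.2.1 e.2) = u
    try simp only [Set.mem_setOf_eq] at he
    rw [he]; exact hxu
  · intro e
    exact ⟨{e' | e'.1.2.1 e'.2 = e.1.2.1 e.2}, ⟨e.1.2.1 e.2, rfl, rfl⟩, rfl⟩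
  · rintro u S ⟨x, hxu, rfl⟩ S' ⟨x', hxu', rfl⟩ ⟨e, he, he'⟩
    try simp only [Set.mem_setOf_eq] at he he'
    have : x = x' := by rw [← he, ← he']
    rw [this]

theorem baseSat (B : BipSepGraph) (hB : B.IsSep) (w : Choice B)
    (X Y : Set B.E) (hX : X ∈ B.C w.1) (hY : Y ∈ B.C w.1) (hXY : X ≠ Y)
    (hX2 : ¬ X.Subsingleton) (hY2 : ¬ Y.Subsingleton) :
    Sat (next B) ∅ {w} := by
  classical
  obtain ⟨v, g, hg⟩ := w
  rintro u S ⟨x, hxu, rfl⟩ hall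
  exfalso
  obtain ⟨Z, hZ, hxZ⟩ := hB.2.2.1 x
  by_cases hrv : B.r x = v
  · subst hrv
    set D := if Z = X then Y else X with hD
    have hDC : D ∈ B.C (B.r x) := by rw [hD]; split <;> assumption
    have hDZ : D ≠ Z := by
      rw [hD]; split
      · next h => exact fun hq => hXY (h ▸ hq).symm
      · next h => exact fun hq => h hq.symm
    have hD2 : ¬ D.Subsingleton := by rw [hD]; split <;> assumption
    have hd : ∃ d ∈ D, d ≠ g ⟨D, hDC⟩ := by
      rw [Set.not_subsingleton_iff] at hD2
      obtain ⟨a, ha, b, hb, hab⟩ := hD2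
      by_cases h : a = g ⟨D, hDC⟩
      · exact ⟨b, hb, by rw [← h]; exact fun q => hab q.symm⟩
      · exact ⟨a, ha, h⟩
    obtain ⟨d, hdD, hdg⟩ := hd
    set f : {A : Set B.E // A ∈ B.C (B.r x)} → B.E :=
      fun A => if A.1 = Z then x else if A.1 = D then d else g A with hf
    have hfmem : ∀ A, f A ∈ A.1 := by
      intro A
      rw [hf]; dsimp only
      split
      · next h => rw [h]; exact hxZ
      · split
        · next h => rw [h]; exact hdD
        · exact hg A
    have hmem : (⟨⟨B.r x, ⟨f, hfmem⟩⟩, ⟨Z, hZ⟩⟩ : (next B).E) ∈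
        {e : (next B).E | e.1.2.1 e.2 = x} := by
      show f ⟨Z, hZ⟩ = x
      rw [hf]
      simp
    have h2 := hall _ hmem
    replace h2 := Set.mem_singleton_iff.mp h2
    have h2' : (⟨B.r x, ⟨f, hfmem⟩⟩ : Choice B) = ⟨B.r x, ⟨g, hg⟩⟩ := h2
    rw [Sigma.mk.inj_iff] at h2'
    obtain ⟨-, h2'⟩ := h2'
    have h3 := congrFun (Subtype.mk_eq_mk.mp (eq_of_heq h2')) ⟨D, hDC⟩
    rw [hf] at h3
    simp only [if_neg hDZ, if_pos rfl] at h3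
    exact hdg h3
  · have hmem : (⟨⟨B.r x, B.thru hB (B.r x) x Z hxZ⟩, ⟨Z, hZ⟩⟩ : (next B).E) ∈
        {e : (next B).E | e.1.2.1 e.2 = x} := by
      show (B.thru hB (B.r x) x Z hxZ).1 ⟨Z, hZ⟩ = x
      simp [thru]
    have h2 := hall _ hmem
    replace h2 := Set.mem_singleton_iff.mp h2
    exact hrv (congrArg Sigma.fst h2)

def stepSet (B : BipSepGraph) (H1 : Set B.V1) : Set (Choice B) :=
  {c | ∃ A : {A : Set B.E // A ∈ B.C c.1}, B.s (c.2.1 A) ∈ H1}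

theorem stepHered (B : BipSepGraph) (H1 : Set B.V1) :
    Hered (next B) H1 (stepSet B H1) := by
  intro e he
  exact ⟨e.2, he⟩

theorem stepSat (B : BipSepGraph) (hB : B.IsSep) (H0 : Set B.V0) (H1 : Set B.V1)
    (hh : Hered B H0 H1) (hs : Sat B H0 H1) :
    Sat (next B) H1 (stepSet B H1) := by
  classical
  rintro u S ⟨x, hxu, rfl⟩ hall
  subst hxu
  by_cases hex : ∃ Z ∈ B.C (B.r x), ∀ z ∈ Z, B.s z ∈ H1
  · obtain ⟨Z, hZ, hZall⟩ := hex
    exact hh x (hs (B.r x) Z hZ hZall)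
  · push_neg at hex
    obtain ⟨Z, hZ, hxZ⟩ := hB.2.2.1 x
    set f : {A : Set B.E // A ∈ B.C (B.r x)} → B.E :=
      fun A => if h : A.1 = Z then x else (hex A.1 A.2).choose with hf
    have hfmem : ∀ A, f A ∈ A.1 := by
      intro A; rw [hf]; dsimp only
      split
      · next h => rw [h]; exact hxZ
      · exact (hex A.1 A.2).choose_spec.1
    have hmem : (⟨⟨B.r x, ⟨f, hfmem⟩⟩, ⟨Z, hZ⟩⟩ : (next B).E) ∈
        {e : (next B).E | e.1.2.1 e.2 = x} := by
      show f ⟨Z, hZ⟩ = x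
      rw [hf]; simp
    obtain ⟨A, hA⟩ := hall _ hmem
    by_cases hAZ : A.1 = Z
    · have hfa : f A = x := dif_pos hAZ
      have : B.s (f A) ∈ H1 := hA
      rwa [hfa] at this
    · have hfa : f A = (hex A.1 A.2).choose := dif_neg hAZ
      have : B.s (f A) ∈ H1 := hA
      rw [hfa] at this
      exact absurd this (hex A.1 A.2).choose_spec.2

variable (G : BipSepGraph)

def Qseq (n : ℕ) (w : Choice (lvl G n)) : (m : ℕ) → Set ((lvl G (n+1+m)).V1)
  | 0 => {w}
  | m+1 => stepSet (lvl G (n+1+m)) (Qseq n w m)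

def Pseq (n : ℕ) (w : Choice (lvl G n)) : (m : ℕ) → Set ((lvl G (n+1+m)).V0)
  | 0 => ∅
  | m+1 => Qseq G n w m

theorem pairInv (hsep : ∀ m, (lvl G m).IsSep) (n : ℕ) (w : Choice (lvl G n))
    (hbase : Sat (lvl G (n+1)) ∅ {w}) :
    ∀ m, Hered (lvl G (n+1+m)) (Pseq G n w m) (Qseq G n w m) ∧
         Sat (lvl G (n+1+m)) (Pseq G n w m) (Qseq G n w m) := by
  intro m
  induction m with
  | zero =>
    exact ⟨fun e he => absurd he (Set.notMem_empty _), hbase⟩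
  | succ m ih =>
    exact ⟨stepHered _ _, stepSat _ (hsep _) _ _ ih.1 ih.2⟩

def Hset (n : ℕ) (w : Choice (lvl G n)) : Set (FV G) :=
  ⋃ m, (fun u => (⟨n+1+m+1, u⟩ : FV G)) '' (Qseq G n w m)

theorem mem_Hset (n : ℕ) (w : Choice (lvl G n)) (m : ℕ) (u : (lvl G (n+1+m)).V1) :
    (⟨n+1+m+1, u⟩ : FV G) ∈ Hset G n w ↔ u ∈ Qseq G n w m := by
  constructor
  · intro hmem
    have hmem := Set.mem_iUnion.mp hmem
    obtain ⟨m', u', hu', heq⟩ := hmem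
    have h1 : n+1+m'+1 = n+1+m+1 := congrArg Sigma.fst heq
    have h2 : m' = m := by omega
    subst h2
    replace heq := Sigma.mk.inj_iff.mp heq
    obtain ⟨-, heq⟩ := heq
    rwa [eq_of_heq heq] at hu'
  · intro h
    apply Set.mem_iUnion.mpr
    exact ⟨m, u, h, rfl⟩

theorem hered_Hset (n : ℕ) (w : Choice (lvl G n)) : HeredInf G (Hset G n w) := by
  rintro ⟨k, ε⟩ he
  have he := Set.mem_iUnion.mp he; simp only [Fr, Set.mem_image] at he
  obtain ⟨m, u', hu', heq⟩ := he
  have h1 : n+1+m+1 = k := congrArg Sigma.fst heq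
  subst h1
  replace heq := Sigma.mk.inj_iff.mp heq
  obtain ⟨-, heq⟩ := heq
  have hu : (lvl G (n+1+m+1)).r ε ∈ Qseq G n w m := by
    rw [← eq_of_heq heq]; exact hu'
  have hstep : (lvl G (n+1+m+1)).s ε ∈ Qseq G n w (m+1) := ⟨ε.2, hu⟩
  exact (mem_Hset G n w (m+1) _).mpr hstep

theorem sat_Hset (hsep : ∀ m, (lvl G m).IsSep) (n : ℕ) (w : Choice (lvl G n))
    (hbase : Sat (lvl G (n+1)) ∅ {w}) : SatInf G (Hset G n w) := by
  rintro ⟨k, u⟩ S hS hall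
  obtain ⟨Z, hZ, rfl⟩ := hS
  obtain ⟨z₀, hz₀⟩ := (hsep k).1 u Z hZ
  have h0 := hall ⟨k, z₀⟩ ⟨z₀, hz₀, rfl⟩
  have h0 := Set.mem_iUnion.mp h0; simp only [Fs, Set.mem_image] at h0
  obtain ⟨m, u', -, heq⟩ := h0
  have h1 : n+1+m+1 = k+1 := congrArg Sigma.fst heq
  have hk : k = n+1+m := by omega
  subst hk
  have hsrc : ∀ z ∈ Z, (lvl G (n+1+m)).s z ∈ Qseq G n w m := by
    intro z hz
    have h2 := hall ⟨n+1+m, z⟩ ⟨z, hz, rfl⟩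
    exact (mem_Hset G n w m _).mp h2
  cases m with
  | zero =>
    exact absurd (hbase u Z hZ hsrc) (Set.notMem_empty _)
  | succ m' =>
    have hu := (pairInv G hsep n w hbase (m'+1)).2 u Z hZ hsrc
    exact (mem_Hset G n w m' u).mpr hu

end BipSepGraph

open BipSepGraph

theorem stmt12 (G : BipSepGraph) (hsep : G.IsSep)
    (hV0 : Finite G.V0) (hV1 : Finite G.V1) (hE : Finite G.E)
    (hsimple : ∀ H : Set (FV G), HeredInf G H → SatInf G H →
        H = ∅ ∨ H = Set.univ) :
    ∀ p : FV G, ∀ S ∈ DInf G p, ∀ T ∈ DInf G p,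
      ¬ S.Subsingleton → ¬ T.Subsingleton → S = T := by
  have hsepAll : ∀ m, (lvl G m).IsSep := by
    intro m
    induction m with
    | zero => exact hsep
    | succ m ih => exact nextIsSep _ ih
  rintro ⟨n, v⟩ S hS T hT hSns hTns
  obtain ⟨X, hX, rfl⟩ := hS
  obtain ⟨Y, hY, rfl⟩ := hT
  by_cases hXY : X = Y
  · rw [hXY]
  · exfalso
    have hX2 : ¬ X.Subsingleton := fun h => hSns (h.image _)
    have hY2 : ¬ Y.Subsingleton := fun h => hTns (h.image _)
    let w : Choice (lvl G n) := ⟨v, pickf _ (hsepAll n) v⟩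
    have hbase : Sat (lvl G (n+1)) ∅ {w} :=
      baseSat (lvl G n) (hsepAll n) w X Y hX hY hXY hX2 hY2
    rcases hsimple (Hset G n w) (hered_Hset G n w) (sat_Hset G hsepAll n w hbase)
      with h | h
    · have hw : (⟨n+1+0+1, w⟩ : FV G) ∈ Hset G n w :=
        (mem_Hset G n w 0 w).mpr rfl
      rw [h] at hw
      exact hw
    · obtain ⟨x₁, hx₁⟩ := (hsepAll n).1 v X hX
      have hmem : (⟨n+1, (lvl G n).s x₁⟩ : FV G) ∈ Hset G n w := by
        rw [h]; exact Set.mem_univ _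
      have hmem := Set.mem_iUnion.mp hmem
      obtain ⟨m, u', -, heq⟩ := hmem
      have h1 : n+1+m+1 = n+1 := congrArg Sigma.fst heq
      omega
end

section
/- Let θ : G ↷ Ω be a partial action on a topological space, and let x ∈ Ω be a point at which θ is topologically free and whose stabiliser Stab(x) is infinite cyclic. Then θ is strongly topologically free at x: for any finitely many non-identity elements g_1,…,g_n ∈ Stab(x) and any open neighbourhood U of x, there exists y ∈ U with g_i ∉ Stab(y) for all i. -/
/-- The stabiliser `Stab(x) = {g : x ∈ Ω_{g⁻¹}, θ_g(x) = x}`. -/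
def PartialAction.Stab {G Ω : Type*} [Group G] (θ : PartialAction G Ω)
    (x : Ω) : Set G :=
  {g | x ∈ θ.dom g⁻¹ ∧ θ.act g x = x}

/-- Topological freeness at a point. -/
def PartialAction.TopFreeAt {G Ω : Type*} [Group G] [TopologicalSpace Ω]
    (θ : PartialAction G Ω) (x : Ω) : Prop :=
  ∀ g ∈ θ.Stab x, g ≠ 1 → ∀ U : Set Ω, IsOpen U → x ∈ U →
    ∃ y ∈ U, g ∉ θ.Stab y

/-- The stabiliser is a subgroup. -/
def PartialAction.stabSubgroup {G Ω : Type*} [Group G] (θ : PartialAction G Ω)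
    (y : Ω) : Subgroup G where
  carrier := θ.Stab y
  one_mem' := by
    constructor
    · simp [θ.dom_one]
    · exact θ.act_one y
  mul_mem' := by
    rintro g h ⟨hd, ha⟩ ⟨hd', ha'⟩
    have := θ.act_mul g h y hd' (by rw [ha']; exact hd)
    exact ⟨this.1, by rw [this.2, ha', ha]⟩
  inv_mem' := by
    rintro g ⟨hd, ha⟩
    refine ⟨by simpa using (ha ▸ θ.mapsTo g hd), ?_⟩
    have := θ.act_inv g y hd
    rwa [ha] at this

lemma PartialAction.mem_stabSubgroup {G Ω : Type*} [Group G] (θ : PartialAction G Ω)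
    (y : Ω) (g : G) : g ∈ θ.stabSubgroup y ↔ g ∈ θ.Stab y := Iff.rfl

theorem stmt13 {G Ω : Type*} [Group G] [TopologicalSpace Ω]
    (θ : PartialAction G Ω)
    (hopen : ∀ g, IsOpen (θ.dom g))
    (hcont : ∀ g, ContinuousOn (θ.act g) (θ.dom g⁻¹))
    (x : Ω) (htf : θ.TopFreeAt x)
    -- `Stab(x)` is infinite cyclic, generated by `g0`:
    (g0 : G) (hgen : ∀ g, g ∈ θ.Stab x ↔ ∃ k : ℤ, g = g0 ^ k)
    (hinf : ∀ k : ℤ, g0 ^ k = 1 → k = 0) :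
    -- strong topological freeness at `x`:
    ∀ (m : ℕ) (gs : Fin m → G), (∀ i, gs i ∈ θ.Stab x) → (∀ i, gs i ≠ 1) →
      ∀ U : Set Ω, IsOpen U → x ∈ U →
        ∃ y ∈ U, ∀ i, gs i ∉ θ.Stab y := by
  intro m gs hmem hne U hU hxU
  -- write gs i = g0 ^ k i
  choose k hk using fun i => (hgen (gs i)).mp (hmem i)
  have hk0 : ∀ i, k i ≠ 0 := by
    intro i h
    exact hne i (by rw [hk i, h, zpow_zero])
  by_cases hm : m = 0
  · subst hm
    exact ⟨x, hxU, fun i => absurd i.2 (by simp)⟩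
  -- the product of the exponents
  set N : ℤ := ∏ i, k i with hN
  have hN0 : N ≠ 0 := Finset.prod_ne_zero_iff.mpr (fun i _ => hk0 i)
  have hdvd : ∀ i, k i ∣ N := fun i => Finset.dvd_prod_of_mem k (Finset.mem_univ i)
  have hmemN : g0 ^ N ∈ θ.Stab x := (hgen _).mpr ⟨N, rfl⟩
  have hneN : g0 ^ N ≠ 1 := fun h => hN0 (hinf N h)
  obtain ⟨y, hyU, hyN⟩ := htf (g0 ^ N) hmemN hneN U hU hxU
  refine ⟨y, hyU, fun i hi => hyN ?_⟩
  have : g0 ^ k i ∈ θ.stabSubgroup y := by rw [← hk i]; exact hi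
  have h2 : (g0 ^ k i) ^ (N / k i) ∈ θ.stabSubgroup y := zpow_mem this _
  rwa [← zpow_mul, Int.mul_ediv_cancel' (hdvd i)] at h2
end

section
/- Let θ : F ↷ Ω be a partial action of a free group F on a topological space, topologically free at a point x ∈ Ω. Then for any two elements g_1, g_2 ∈ Stab(x) \ {1} and any open neighbourhood U of x, there exists y ∈ U with g_1 ∉ Stab(y) and g_2 ∉ Stab(y). -/
namespace PartialAction
variable {G Ω : Type*} [Group G] (θ : PartialAction G Ω)

lemma one_mem_stab' (y : Ω) : (1 : G) ∈ θ.Stab y :=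
  ⟨by rw [inv_one, θ.dom_one]; trivial, θ.act_one y⟩

lemma mul_mem_stab' {y : Ω} {g h : G} (hg : g ∈ θ.Stab y) (hh : h ∈ θ.Stab y) :
    h * g ∈ θ.Stab y := by
  obtain ⟨hd, ha⟩ := hg
  obtain ⟨hd', ha'⟩ := hh
  have h2 : θ.act g y ∈ θ.dom h⁻¹ := by rw [ha]; exact hd'
  obtain ⟨d, e⟩ := θ.act_mul h g y hd h2
  exact ⟨d, by rw [e, ha, ha']⟩

lemma inv_mem_stab' {y : Ω} {g : G} (hg : g ∈ θ.Stab y) : g⁻¹ ∈ θ.Stab y := by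
  obtain ⟨hd, ha⟩ := hg
  refine ⟨?_, ?_⟩
  · rw [inv_inv]
    have := θ.mapsTo g hd
    rwa [ha] at this
  · conv_lhs => rw [← ha]
    exact θ.act_inv g y hd

/-- The stabiliser as a subgroup. -/
def stabSubgroup_s14 (y : Ω) : Subgroup G where
  carrier := θ.Stab y
  one_mem' := θ.one_mem_stab' y
  mul_mem' := fun {a b} ha hb => θ.mul_mem_stab' hb ha
  inv_mem' := fun {a} ha => θ.inv_mem_stab' ha

lemma mem_stabSubgroup_s14 {y : Ω} {g : G} : g ∈ θ.stabSubgroup_s14 y ↔ g ∈ θ.Stab y := Iff.rfl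

lemma conj_mem_stab' {y : Ω} {g h : G} (hy : y ∈ θ.dom g⁻¹)
    (hh : h ∈ θ.Stab (θ.act g y)) : g⁻¹ * h * g ∈ θ.Stab y := by
  obtain ⟨hd, ha⟩ := hh
  obtain ⟨d1, e1⟩ := θ.act_mul h g y hy hd
  have e1' : θ.act (h * g) y = θ.act g y := by rw [e1, ha]
  have hdom2 : θ.act (h * g) y ∈ θ.dom (g⁻¹)⁻¹ := by
    rw [e1', inv_inv]; exact θ.mapsTo g hy
  obtain ⟨d2, e2⟩ := θ.act_mul g⁻¹ (h * g) y d1 hdom2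
  have e3 : θ.act (g⁻¹ * (h * g)) y = y := by rw [e2, e1', θ.act_inv g y hy]
  have key : g⁻¹ * (h * g) ∈ θ.Stab y := ⟨d2, e3⟩
  rw [mul_assoc]
  exact key

end PartialAction

/-- If two nontrivial elements of a free group commute, then some nontrivial element is
simultaneously a `zpow` of both. -/
lemma freeGroup_exists_common_zpow {α : Type*} {a b : FreeGroup α} (ha : a ≠ 1) (hb : b ≠ 1)
    (hc : a * b = b * a) :
    ∃ (g : FreeGroup α) (m n : ℤ), g ≠ 1 ∧ g = a ^ m ∧ g = b ^ n := by
  classical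
  set H : Subgroup (FreeGroup α) := Subgroup.closure {a, b} with hH
  have hcomm : ∀ x ∈ ({a, b} : Set (FreeGroup α)), ∀ y ∈ ({a, b} : Set (FreeGroup α)),
      x * y = y * x := by
    rintro x (rfl | rfl) y (rfl | rfl) <;> simp [hc]
  have Hcomm : ∀ u v : H, u * v = v * u := fun u v =>
    (Subgroup.closureCommGroupOfComm hcomm).mul_comm u v
  haveI : IsFreeGroup H := inferInstance
  set ι := IsFreeGroup.Generators H with hι
  set e : H ≃* FreeGroup ι := (IsFreeGroup.basis H).repr with he
  have hsub : ∀ i j : ι, i = j := by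
    intro i j
    by_contra hij
    have h1 : e.symm (FreeGroup.of i) * e.symm (FreeGroup.of j)
        = e.symm (FreeGroup.of j) * e.symm (FreeGroup.of i) := Hcomm _ _
    have h2 : (FreeGroup.of i * FreeGroup.of j : FreeGroup ι)
        = FreeGroup.of j * FreeGroup.of i := by
      have := congrArg e h1
      simpa using this
    let f : FreeGroup ι →* Equiv.Perm (Fin 3) :=
      FreeGroup.lift (fun x => if x = i then Equiv.swap 0 1 else Equiv.swap 0 2)
    have hfi : f (FreeGroup.of i) = Equiv.swap 0 1 := by simp [f]
    have hfj : f (FreeGroup.of j) = Equiv.swap 0 2 := by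
      simp only [f, FreeGroup.lift_apply_of, if_neg (fun h : j = i => hij h.symm)]
    have h3 := congrArg f h2
    rw [map_mul, map_mul, hfi, hfj] at h3
    exact absurd h3 (by decide)
  have haH : a ∈ H := Subgroup.subset_closure (by simp)
  have hbH : b ∈ H := Subgroup.subset_closure (by simp)
  rcases isEmpty_or_nonempty ι with hemp | ⟨⟨i₀⟩⟩
  · exfalso
    have : ∀ w : FreeGroup ι, w = 1 := by
      intro w
      induction w with
      | C1 => rfl
      | of x => exact isEmptyElim x
      | inv_of x ih => exact isEmptyElim x
      | mul x y ihx ihy => rw [ihx, ihy, one_mul]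
    have : e ⟨a, haH⟩ = e 1 := by rw [map_one]; exact this _
    have : (⟨a, haH⟩ : H) = 1 := e.injective this
    exact ha (congrArg Subtype.val this)
  · have hz : ∀ w : FreeGroup ι, ∃ k : ℤ, w = FreeGroup.of i₀ ^ k := by
      intro w
      induction w with
      | C1 => exact ⟨0, by simp⟩
      | of x => exact ⟨1, by rw [hsub x i₀]; simp⟩
      | inv_of x ih =>
        obtain ⟨k, hk⟩ := ih
        exact ⟨-k, by rw [hk, zpow_neg]⟩
      | mul x y ihx ihy =>
        obtain ⟨k, hk⟩ := ihx
        obtain ⟨l, hl⟩ := ihy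
        exact ⟨k + l, by rw [hk, hl, zpow_add]⟩
    obtain ⟨m, hm⟩ := hz (e ⟨a, haH⟩)
    obtain ⟨n, hn⟩ := hz (e ⟨b, hbH⟩)
    have hm0 : m ≠ 0 := by
      rintro rfl
      simp only [zpow_zero] at hm
      have : (⟨a, haH⟩ : H) = 1 := e.injective (by rw [hm, map_one])
      exact ha (congrArg Subtype.val this)
    have hn0 : n ≠ 0 := by
      rintro rfl
      simp only [zpow_zero] at hn
      have : (⟨b, hbH⟩ : H) = 1 := e.injective (by rw [hn, map_one])
      exact hb (congrArg Subtype.val this)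
    refine ⟨a ^ (n : ℤ), n, m, ?_, rfl, ?_⟩
    · intro h1
      have : ((⟨a, haH⟩ : H) ^ n : H) = 1 := by
        apply Subtype.ext
        simpa using h1
      have h2 : (FreeGroup.of i₀ : FreeGroup ι) ^ (m * n) = 1 := by
        have := congrArg e this
        rw [map_zpow, hm, map_one, ← zpow_mul] at this
        exact this
      have hmn : m * n ≠ 0 := mul_ne_zero hm0 hn0
      let ψ : FreeGroup ι →* Multiplicative ℤ :=
        FreeGroup.lift (fun _ => Multiplicative.ofAdd (1 : ℤ))
      have := congrArg ψ h2
      rw [map_zpow, map_one] at this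
      have hψ : ψ (FreeGroup.of i₀) = Multiplicative.ofAdd (1 : ℤ) := by simp [ψ]
      rw [hψ] at this
      have h4 : Multiplicative.toAdd (Multiplicative.ofAdd (1 : ℤ) ^ (m * n)) = 0 := by
        rw [this]; rfl
      rw [toAdd_zpow, toAdd_ofAdd, smul_eq_mul, mul_one] at h4
      exact hmn h4
    · -- a ^ n = b ^ m
      have key : ((⟨a, haH⟩ : H) ^ n : H) = (⟨b, hbH⟩ : H) ^ m := by
        apply e.injective
        rw [map_zpow, map_zpow, hm, hn, ← zpow_mul, ← zpow_mul, mul_comm]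
      have := congrArg Subtype.val key
      simpa using this

theorem stmt14 {α Ω : Type*} [TopologicalSpace Ω]
    (θ : PartialAction (FreeGroup α) Ω)
    (hopen : ∀ g, IsOpen (θ.dom g))
    (hcont : ∀ g, ContinuousOn (θ.act g) (θ.dom g⁻¹))
    (x : Ω) (htf : θ.TopFreeAt x)
    (g₁ g₂ : FreeGroup α)
    (h₁ : g₁ ∈ θ.Stab x) (h₂ : g₂ ∈ θ.Stab x)
    (hg₁ : g₁ ≠ 1) (hg₂ : g₂ ≠ 1)
    (U : Set Ω) (hU : IsOpen U) (hxU : x ∈ U) :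
    ∃ y ∈ U, g₁ ∉ θ.Stab y ∧ g₂ ∉ θ.Stab y := by
  by_cases hcomm : g₁ * g₂ = g₂ * g₁
  · -- commuting case
    obtain ⟨g, m, n, hg, hgm, hgn⟩ := freeGroup_exists_common_zpow hg₁ hg₂ hcomm
    have hgx : g ∈ θ.Stab x := by
      rw [hgm]
      exact zpow_mem ((θ.mem_stabSubgroup_s14).2 h₁) m
    obtain ⟨y, hyU, hgy⟩ := htf g hgx hg U hU hxU
    refine ⟨y, hyU, ?_, ?_⟩
    · intro s₁
      exact hgy (by rw [hgm]; exact zpow_mem ((θ.mem_stabSubgroup_s14).2 s₁) m)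
    · intro s₂
      exact hgy (by rw [hgn]; exact zpow_mem ((θ.mem_stabSubgroup_s14).2 s₂) n)
  · -- non-commuting case: use the commutator
    set c : FreeGroup α := g₁⁻¹ * g₂⁻¹ * g₁ * g₂ with hcdef
    have hcne : c ≠ 1 := by
      intro h
      apply hcomm
      have : g₂ * g₁ * c = g₂ * g₁ := by rw [h, mul_one]
      calc g₁ * g₂ = g₂ * g₁ * c := by rw [hcdef]; group
        _ = g₂ * g₁ := this
    have hcx : c ∈ θ.Stab x := by
      have := mul_mem (mul_mem (mul_mem (inv_mem ((θ.mem_stabSubgroup_s14).2 h₁))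
        (inv_mem ((θ.mem_stabSubgroup_s14).2 h₂))) ((θ.mem_stabSubgroup_s14).2 h₁))
        ((θ.mem_stabSubgroup_s14).2 h₂)
      exact (θ.mem_stabSubgroup_s14).1 this
    -- neighbourhoods
    set V₁ : Set Ω := θ.dom g₁⁻¹ ∩ θ.act g₁ ⁻¹' U with hV₁
    set V₂ : Set Ω := θ.dom g₂⁻¹ ∩ θ.act g₂ ⁻¹' U with hV₂
    have hV₁o : IsOpen V₁ := (hcont g₁).isOpen_inter_preimage (hopen g₁⁻¹) hU
    have hV₂o : IsOpen V₂ := (hcont g₂).isOpen_inter_preimage (hopen g₂⁻¹) hU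
    have hxV₁ : x ∈ V₁ := ⟨h₁.1, by simp only [Set.mem_preimage, h₁.2]; exact hxU⟩
    have hxV₂ : x ∈ V₂ := ⟨h₂.1, by simp only [Set.mem_preimage, h₂.2]; exact hxU⟩
    set V : Set Ω := U ∩ V₁ ∩ V₂ with hV
    obtain ⟨y, hyV, hyc⟩ := htf c hcx hcne V
      ((hU.inter hV₁o).inter hV₂o) ⟨⟨hxU, hxV₁⟩, hxV₂⟩
    obtain ⟨⟨hyU, hyV₁⟩, hyV₂⟩ := hyV
    by_cases s₁ : g₁ ∈ θ.Stab y <;> by_cases s₂ : g₂ ∈ θ.Stab y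
    · -- both stabilise y : contradiction with c ∉ Stab y
      exact absurd ((θ.mem_stabSubgroup_s14).1
        (mul_mem (mul_mem (mul_mem (inv_mem ((θ.mem_stabSubgroup_s14).2 s₁))
          (inv_mem ((θ.mem_stabSubgroup_s14).2 s₂))) ((θ.mem_stabSubgroup_s14).2 s₁))
          ((θ.mem_stabSubgroup_s14).2 s₂))) hyc
    · -- g₁ stabilises y, g₂ does not : replace y by act g₂ y
      refine ⟨θ.act g₂ y, hyV₂.2, ?_, ?_⟩
      · -- g₁ ∉ Stab (act g₂ y)
        intro t
        apply hyc
        have hconj : g₂⁻¹ * g₁ * g₂ ∈ θ.Stab y := θ.conj_mem_stab' hyV₂.1 t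
        have : c ∈ θ.stabSubgroup_s14 y := by
          have h5 : c = g₁⁻¹ * (g₂⁻¹ * g₁ * g₂) := by rw [hcdef]; group
          rw [h5]
          exact mul_mem (inv_mem ((θ.mem_stabSubgroup_s14).2 s₁))
            ((θ.mem_stabSubgroup_s14).2 hconj)
        exact (θ.mem_stabSubgroup_s14).1 this
      · -- g₂ ∉ Stab (act g₂ y)
        rintro ⟨td, ta⟩
        apply s₂
        have e1 : θ.act g₂⁻¹ (θ.act g₂ y) = y := θ.act_inv g₂ y hyV₂.1
        have e2 : θ.act g₂⁻¹ (θ.act g₂ y) = θ.act g₂ y := by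
          conv_lhs => rw [← ta]
          exact θ.act_inv g₂ (θ.act g₂ y) td
        have : θ.act g₂ y = y := by rw [← e2, e1]
        exact ⟨hyV₂.1, this⟩
    · -- g₂ stabilises y, g₁ does not : replace y by act g₁ y
      refine ⟨θ.act g₁ y, hyV₁.2, ?_, ?_⟩
      · -- g₁ ∉ Stab (act g₁ y)
        rintro ⟨td, ta⟩
        apply s₁
        have e1 : θ.act g₁⁻¹ (θ.act g₁ y) = y := θ.act_inv g₁ y hyV₁.1
        have e2 : θ.act g₁⁻¹ (θ.act g₁ y) = θ.act g₁ y := by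
          conv_lhs => rw [← ta]
          exact θ.act_inv g₁ (θ.act g₁ y) td
        have : θ.act g₁ y = y := by rw [← e2, e1]
        exact ⟨hyV₁.1, this⟩
      · -- g₂ ∉ Stab (act g₁ y)
        intro t
        apply hyc
        have hconj : g₁⁻¹ * g₂ * g₁ ∈ θ.Stab y := θ.conj_mem_stab' hyV₁.1 t
        have : c ∈ θ.stabSubgroup_s14 y := by
          have h5 : c = (g₁⁻¹ * g₂ * g₁)⁻¹ * g₂ := by rw [hcdef]; group
          rw [h5]
          exact mul_mem (inv_mem ((θ.mem_stabSubgroup_s14).2 hconj))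
            ((θ.mem_stabSubgroup_s14).2 s₂)
        exact (θ.mem_stabSubgroup_s14).1 this
    · -- neither stabilises y
      exact ⟨y, hyU, s₁, s₂⟩
end

section
/- Let θ : G ↷ Ω be a partial action of a discrete group on a topological space, and let x ∈ Ω be an isolated point whose orbit is {x} (or more generally consider the restriction to the invariant discrete orbit of x). Then the map sending g ∈ Stab(x) to the partial-action groupoid element (g,x) identifies the isotropy group of the transformation groupoid at x with Stab(x); in the algebraic crossed product over a field K with Ω totally disconnected, the corner 1_x (C_K(Ω) ⋊ G) 1_x is isomorphic as a K-algebra to the group algebra K[Stab(x)], where 1_x is the indicator function of {x}. -/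
set_option linter.unusedSectionVars false
open scoped Classical

variable {G Ω K : Type} [Group G] [TopologicalSpace Ω] [Field K]

/-- The multiplication of the algebraic partial crossed product
`C_K(Ω) ⋊ G`, on the carrier `G →₀ (Ω → K)`:
`(f δ_g)(f' δ_h) = θ_g(θ_{g⁻¹}(f)·f') δ_{gh}`. -/
noncomputable def mulRaw (θ : PartialAction G Ω)
    (F F' : G →₀ (Ω → K)) : G →₀ (Ω → K) :=
  F.sum fun g f => F'.sum fun h f' =>
    Finsupp.single (g * h)
      ((θ.dom g).indicator fun y => f y * f' (θ.act g⁻¹ y))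

/-- Membership in the crossed product: each component `f_g` is locally
constant, compactly supported, and supported in `Ω_g`. -/
def IsGoodEl (θ : PartialAction G Ω) (F : G →₀ (Ω → K)) : Prop :=
  ∀ g : G, Function.support (F g) ⊆ θ.dom g ∧
    IsLocallyConstant (F g) ∧ HasCompactSupport (F g)

/-- The idempotent `1_x δ_1`. -/
noncomputable def oneX (x : Ω) : G →₀ (Ω → K) :=
  Finsupp.single 1 (Set.indicator {x} 1)

/-- The canonical map `K[G] → C_K(Ω) ⋊ G`, `c·g ↦ (c·1_x) δ_g`; restricted
to elements supported in `Stab(x)` it realises `K[Stab(x)]` as the corner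
`1_x (C_K(Ω) ⋊ G) 1_x`. -/
noncomputable def jmap (x : Ω) (w : MonoidAlgebra K G) : G →₀ (Ω → K) :=
  w.coeff.sum fun g c => Finsupp.single g (Set.indicator {x} fun _ => c)


lemma stab_inv (θ : PartialAction G Ω) {x : Ω} {g : G}
    (h1 : x ∈ θ.dom g⁻¹) (h2 : θ.act g x = x) :
    x ∈ θ.dom g ∧ θ.act g⁻¹ x = x := by
  have hx : x ∈ θ.dom g := h2 ▸ θ.mapsTo g h1
  have h3 := θ.act_inv g x h1
  rw [h2] at h3
  exact ⟨hx, h3⟩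

lemma sum_single_apply {α M N : Type*} [AddCommMonoid M] [AddCommMonoid N]
    (w : α →₀ M) (φ : α → M → N) (h0 : ∀ g, φ g 0 = 0) (k : α) :
    (w.sum fun g c => Finsupp.single g (φ g c)) k = φ k (w k) := by
  classical
  rw [Finsupp.sum_apply]
  simp only [Finsupp.single_apply]
  rw [Finsupp.sum_ite_eq']
  split_ifs with h
  · rfl
  · rw [Finsupp.notMem_support_iff.mp h, h0]

lemma ind_apply (x y : Ω) (c : K) :
    Set.indicator ({x} : Set Ω) (fun _ => c) y = if y = x then c else 0 := by
  simp [Set.indicator_apply]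

lemma jmap_apply (x : Ω) (w : MonoidAlgebra K G) (g : G) :
    jmap x w g = Set.indicator {x} fun _ => w.coeff g := by
  classical
  refine (sum_single_apply w.coeff (fun _ c => Set.indicator {x} fun _ => c) (fun g => ?_) g)
  funext y; simp [Set.indicator_apply]

lemma jmap_apply₂ (x : Ω) (w : MonoidAlgebra K G) (g : G) (y : Ω) :
    jmap x w g y = if y = x then w.coeff g else 0 := by
  rw [jmap_apply, ind_apply]

lemma mulRaw_single_left (θ : PartialAction G Ω) (g : G) (f : Ω → K)
    (F' : G →₀ (Ω → K)) :
    mulRaw θ (Finsupp.single g f) F' = F'.sum fun h f' =>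
      Finsupp.single (g * h)
        ((θ.dom g).indicator fun y => f y * f' (θ.act g⁻¹ y)) := by
  unfold mulRaw
  apply Finsupp.sum_single_index
  have hz : (fun _ : Ω => (0:K)) = 0 := rfl
  simp [Set.indicator, hz]

lemma mulRaw_single_right (θ : PartialAction G Ω) (F : G →₀ (Ω → K))
    (h : G) (f' : Ω → K) :
    mulRaw θ F (Finsupp.single h f') = F.sum fun g f =>
      Finsupp.single (g * h)
        ((θ.dom g).indicator fun y => f y * f' (θ.act g⁻¹ y)) := by
  unfold mulRaw
  refine Finsupp.sum_congr fun g _ => ?_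
  apply Finsupp.sum_single_index
  have hz : (fun _ : Ω => (0:K)) = 0 := rfl
  simp [Set.indicator, hz]

lemma oneX_mul_apply (θ : PartialAction G Ω) (x : Ω) (F : G →₀ (Ω → K))
    (k : G) (y : Ω) :
    mulRaw θ (oneX x) F k y = Set.indicator ({x} : Set Ω) 1 y * F k y := by
  have : mulRaw θ (oneX x) F k
      = fun y => Set.indicator ({x} : Set Ω) 1 y * F k y := by
    rw [oneX, mulRaw_single_left]
    simp only [θ.dom_one, one_mul, inv_one, θ.act_one, Set.indicator_univ]
    exact sum_single_apply F
      (fun _ f' => fun y => Set.indicator ({x} : Set Ω) 1 y * f' y)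
      (fun g => by funext y; simp) k
  rw [this]

lemma mul_oneX_apply (θ : PartialAction G Ω) (x : Ω) (F : G →₀ (Ω → K))
    (k : G) :
    mulRaw θ F (oneX x) k = (θ.dom k).indicator
      (fun y => F k y * Set.indicator ({x} : Set Ω) 1 (θ.act k⁻¹ y)) := by
  rw [oneX, mulRaw_single_right]
  simp only [mul_one]
  refine sum_single_apply F
    (fun g f => (θ.dom g).indicator
      fun y => f y * Set.indicator ({x} : Set Ω) 1 (θ.act g⁻¹ y))
    (fun g => ?_) k
  have hz : (fun _ : Ω => (0:K)) = 0 := rfl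
  simp [Set.indicator, hz]

lemma corner_apply (θ : PartialAction G Ω) (x : Ω) (F : G →₀ (Ω → K))
    (k : G) (y : Ω) :
    mulRaw θ (oneX x) (mulRaw θ F (oneX x)) k y
      = Set.indicator ({x} : Set Ω) 1 y * (θ.dom k).indicator
          (fun z => F k z * Set.indicator ({x} : Set Ω) 1 (θ.act k⁻¹ z)) y := by
  rw [oneX_mul_apply, mul_oneX_apply]

lemma corner_jmap (θ : PartialAction G Ω) (x : Ω) (w : MonoidAlgebra K G)
    (hw : (↑w.coeff.support : Set G) ⊆ {g : G | x ∈ θ.dom g⁻¹ ∧ θ.act g x = x}) :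
    mulRaw θ (oneX x) (mulRaw θ (jmap x w) (oneX x)) = jmap x w := by
  ext k y
  rw [corner_apply, jmap_apply₂]
  by_cases hy : y = x
  · subst hy
    by_cases hk : w.coeff k = 0
    · simp [Set.indicator_apply, jmap_apply₂, hk]
    · obtain ⟨hd, ha⟩ := hw (by simpa [Finsupp.mem_support_iff] using hk)
      obtain ⟨hd', ha'⟩ := stab_inv θ hd ha
      simp [Set.indicator_apply, jmap_apply₂, hd', ha']
  · simp [Set.indicator_apply, hy]

lemma jmap_add (x : Ω) (w w' : MonoidAlgebra K G) :
    jmap x (w + w') = (jmap x w : G →₀ (Ω → K)) + jmap x w' := by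
  ext g y
  simp only [Finsupp.add_apply, Pi.add_apply, jmap_apply₂, MonoidAlgebra.coeff_add]
  split_ifs <;> first | rfl | simp

lemma jmap_smul (x : Ω) (c : K) (w : MonoidAlgebra K G) :
    jmap x (c • w) = c • jmap x w := by
  ext g y
  simp only [Finsupp.smul_apply, Pi.smul_apply, jmap_apply₂, smul_eq_mul]
  split_ifs <;> first | rfl | simp

lemma jmap_single (x : Ω) (g : G) (c : K) :
    jmap x (MonoidAlgebra.single g c) = Finsupp.single g (Set.indicator {x} fun _ => c) := by
  unfold jmap
  rw [MonoidAlgebra.coeff_single]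
  apply Finsupp.sum_single_index
  have hz : (fun _ : Ω => (0:K)) = 0 := rfl
  simp [hz]

noncomputable def jhom (x : Ω) : MonoidAlgebra K G →+ (G →₀ (Ω → K)) where
  toFun := jmap x
  map_zero' := by
    ext g y; simp [jmap_apply₂]
  map_add' := jmap_add x

lemma jmap_inj (x : Ω) (w w' : MonoidAlgebra K G)
    (h : jmap x w = jmap x w') : w = w' := by
  ext g
  have h2 := congrFun (congrArg (fun F : G →₀ (Ω → K) => F g) h) x
  simpa [jmap_apply₂] using h2

lemma jmap_mul (θ : PartialAction G Ω) (x : Ω) (w w' : MonoidAlgebra K G)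
    (hw : (↑w.coeff.support : Set G) ⊆ {g : G | x ∈ θ.dom g⁻¹ ∧ θ.act g x = x}) :
    jmap x (w * w') = mulRaw θ (jmap x w) (jmap x w') := by
  classical
  have hz : (fun _ : Ω => (0:K)) = 0 := rfl
  have hR : mulRaw θ (jmap x w) (jmap x w')
      = w.coeff.sum fun g c => w'.coeff.sum fun h c' =>
          Finsupp.single (g*h) ((θ.dom g).indicator fun y =>
            Set.indicator ({x} : Set Ω) (fun _ => c) y *
            Set.indicator ({x} : Set Ω) (fun _ => c') (θ.act g⁻¹ y)) := by
    unfold mulRaw jmap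
    rw [Finsupp.sum_sum_index]
    · refine Finsupp.sum_congr fun g _ => ?_
      rw [Finsupp.sum_single_index (by simp [Set.indicator, hz])]
      rw [Finsupp.sum_sum_index]
      · refine Finsupp.sum_congr fun h _ => ?_
        rw [Finsupp.sum_single_index (by simp [Set.indicator, hz])]
      · intro h; simp [Set.indicator, hz]
      · intro h f₁ f₂
        rw [← Finsupp.single_add]
        congr 1
        funext y
        simp only [Set.indicator_apply, Pi.add_apply]
        split_ifs <;> simp [mul_add]
    · intro g; simp [Set.indicator, hz]
    · intro g f₁ f₂
      rw [← Finsupp.sum_add]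
      refine Finsupp.sum_congr fun h _ => ?_
      rw [← Finsupp.single_add]
      congr 1
      funext y
      simp only [Set.indicator_apply, Pi.add_apply]
      split_ifs <;> simp [add_mul]
  have hL : jmap x (w * w')
      = w.coeff.sum fun g c => w'.coeff.sum fun h c' =>
          Finsupp.single (g*h)
            (Set.indicator ({x} : Set Ω) fun _ => c * c') := by
    have h0 : jmap x (w * w') = (jhom (K := K) x) (w * w') := rfl
    rw [h0, MonoidAlgebra.mul_def, map_finsuppSum]
    refine Finsupp.sum_congr fun g _ => ?_
    rw [map_finsuppSum]
    refine Finsupp.sum_congr fun h _ => ?_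
    exact jmap_single x (g * h) _
  rw [hL, hR]
  refine Finsupp.sum_congr fun g hg => ?_
  obtain ⟨hd, ha⟩ := hw (by exact_mod_cast hg)
  obtain ⟨hd', ha'⟩ := stab_inv θ hd ha
  refine Finsupp.sum_congr fun h _ => ?_
  congr 1
  funext y
  by_cases hy : y = x
  · subst hy
    simp [Set.indicator_apply, hd', ha']
  · simp [Set.indicator_apply, hy]

lemma jmap_good [T2Space Ω] (θ : PartialAction G Ω) (x : Ω)
    (hx : IsOpen ({x} : Set Ω)) (w : MonoidAlgebra K G)
    (hw : (↑w.coeff.support : Set G) ⊆ {g : G | x ∈ θ.dom g⁻¹ ∧ θ.act g x = x}) :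
    IsGoodEl θ (jmap x w) := by
  intro g
  refine ⟨?_, ?_, ?_⟩
  · intro y hy
    rw [Function.mem_support, jmap_apply₂] at hy
    by_cases hyx : y = x
    · subst hyx
      rw [if_pos rfl] at hy
      obtain ⟨hd, ha⟩ := hw (by simpa [Finsupp.mem_support_iff] using hy)
      exact (stab_inv θ hd ha).1
    · rw [if_neg hyx] at hy; exact absurd rfl hy
  · rw [IsLocallyConstant.iff_exists_open]
    intro y
    by_cases hyx : y = x
    · refine ⟨{x}, hx, by simp [hyx], fun z hz => ?_⟩
      rw [Set.mem_singleton_iff.mp hz, hyx]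
    · refine ⟨{x}ᶜ, isClosed_singleton.isOpen_compl, by simpa using hyx,
        fun z hz => ?_⟩
      rw [jmap_apply₂, jmap_apply₂, if_neg hyx, if_neg (by simpa using hz)]
  · exact HasCompactSupport.intro isCompact_singleton
      (fun y hy => by rw [jmap_apply₂, if_neg (by simpa using hy)])

lemma corner_surj (θ : PartialAction G Ω) (x : Ω) (F : G →₀ (Ω → K))
    (hF : mulRaw θ (oneX x) (mulRaw θ F (oneX x)) = F) :
    ∃ w : MonoidAlgebra K G,
      (↑w.coeff.support : Set G) ⊆ {g : G | x ∈ θ.dom g⁻¹ ∧ θ.act g x = x} ∧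
      jmap x w = F := by
  classical
  have key : ∀ k y, F k y = Set.indicator ({x} : Set Ω) 1 y *
      (θ.dom k).indicator
        (fun z => F k z * Set.indicator ({x} : Set Ω) 1 (θ.act k⁻¹ z)) y := by
    intro k y
    have h := corner_apply θ x F k y
    rw [hF] at h
    exact h
  have hx1 : Set.indicator ({x} : Set Ω) (1 : Ω → K) x = 1 := by
    simp [Set.indicator_apply]
  refine ⟨.ofCoeff (F.mapRange (fun f => f x) rfl), ?_, ?_⟩
  · intro g hg
    have h2 : F g x ≠ 0 := by
      simpa [Finsupp.mem_support_iff, MonoidAlgebra.coeff_ofCoeff, Finsupp.mapRange_apply] using hg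
    rw [key g x, hx1, one_mul] at h2
    by_cases hdom : x ∈ θ.dom g
    · rw [Set.indicator_of_mem hdom] at h2
      have h4 : Set.indicator ({x} : Set Ω) (1 : Ω → K) (θ.act g⁻¹ x) ≠ 0 :=
        fun h => h2 (by rw [h, mul_zero])
      have h5 : θ.act g⁻¹ x = x := by
        by_contra hne
        exact h4 (Set.indicator_of_notMem (by simpa using hne) _)
      have h6 := stab_inv θ (g := g⁻¹) (by rwa [inv_inv]) h5
      rw [inv_inv] at h6
      exact ⟨h6.1, h6.2⟩
    · rw [Set.indicator_of_notMem hdom] at h2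
      exact absurd rfl h2
  · ext g y
    rw [jmap_apply₂, MonoidAlgebra.coeff_ofCoeff, Finsupp.mapRange_apply]
    by_cases hy : y = x
    · subst hy; rw [if_pos rfl]
    · rw [if_neg hy, key g y,
        Set.indicator_of_notMem (by simpa using hy), zero_mul]

theorem stmt16 [T2Space Ω] [LocallyCompactSpace Ω]
    [TotallyDisconnectedSpace Ω]
    (θ : PartialAction G Ω)
    (hclopen : ∀ g, IsOpen (θ.dom g) ∧ IsClosed (θ.dom g))
    (hcont : ∀ g, ContinuousOn (θ.act g) (θ.dom g⁻¹))
    (x : Ω) (hx : IsOpen ({x} : Set Ω))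
    -- the orbit of `x` is `{x}`
    (horb : ∀ g, x ∈ θ.dom g⁻¹ → θ.act g x = x) :
    -- `Stab(x) = {g : x ∈ Ω_{g⁻¹}, θ_g x = x}` is a subgroup of `G`
    ((1 : G) ∈ {g : G | x ∈ θ.dom g⁻¹ ∧ θ.act g x = x} ∧
      (∀ g ∈ {g : G | x ∈ θ.dom g⁻¹ ∧ θ.act g x = x}, g⁻¹ ∈
        {g : G | x ∈ θ.dom g⁻¹ ∧ θ.act g x = x}) ∧
      (∀ g ∈ {g : G | x ∈ θ.dom g⁻¹ ∧ θ.act g x = x},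
        ∀ h ∈ {g : G | x ∈ θ.dom g⁻¹ ∧ θ.act g x = x}, g * h ∈
          {g : G | x ∈ θ.dom g⁻¹ ∧ θ.act g x = x})) ∧
    -- `j` maps `K[Stab(x)]` into the corner `1_x (C_K(Ω) ⋊ G) 1_x` ...
    (∀ w : MonoidAlgebra K G,
        (↑w.coeff.support : Set G) ⊆ {g : G | x ∈ θ.dom g⁻¹ ∧ θ.act g x = x} →
        IsGoodEl θ (jmap x w) ∧
        mulRaw θ (oneX x) (mulRaw θ (jmap x w) (oneX x)) = jmap x w) ∧
    -- ... is `K`-linear ...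
    (∀ w w' : MonoidAlgebra K G, jmap x (w + w') =
        (jmap x w : G →₀ (Ω → K)) + jmap x w') ∧
    (∀ (c : K) (w : MonoidAlgebra K G), jmap x (c • w) = c • jmap x w) ∧
    -- ... multiplicative on `K[Stab(x)]` ...
    (∀ w w' : MonoidAlgebra K G,
        (↑w.coeff.support : Set G) ⊆ {g : G | x ∈ θ.dom g⁻¹ ∧ θ.act g x = x} →
        (↑w'.coeff.support : Set G) ⊆ {g : G | x ∈ θ.dom g⁻¹ ∧ θ.act g x = x} →
        jmap x (w * w') = mulRaw θ (jmap x w) (jmap x w')) ∧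
    -- ... injective ...
    (∀ w w' : MonoidAlgebra K G, jmap x w = jmap x w' → w = w') ∧
    -- ... and surjective onto the corner.
    (∀ F : G →₀ (Ω → K), IsGoodEl θ F →
        mulRaw θ (oneX x) (mulRaw θ F (oneX x)) = F →
        ∃ w : MonoidAlgebra K G,
          (↑w.coeff.support : Set G) ⊆ {g : G | x ∈ θ.dom g⁻¹ ∧ θ.act g x = x} ∧
          jmap x w = F) := by
  refine ⟨⟨?_, ?_, ?_⟩, ?_, ?_, ?_, ?_, ?_, ?_⟩
  · exact ⟨by simp [θ.dom_one], θ.act_one x⟩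
  · intro g hg
    obtain ⟨hd, ha⟩ := hg
    obtain ⟨hd', ha'⟩ := stab_inv θ hd ha
    exact ⟨by rwa [inv_inv], ha'⟩
  · intro g hg h hh
    obtain ⟨h1, h2⟩ := θ.act_mul g h x hh.1 (by rw [hh.2]; exact hg.1)
    exact ⟨h1, by rw [h2, hh.2, hg.2]⟩
  · intro w hw
    exact ⟨jmap_good θ x hx w hw, corner_jmap θ x w hw⟩
  · exact jmap_add x
  · exact jmap_smul x
  · intro w w' hw _
    exact jmap_mul θ x w w' hw
  · exact jmap_inj x
  · intro F _ hF
    exact corner_surj θ x F hF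
end

section
/- Let (E,C) be a finite bipartite separated graph and let A ⊆ E^1 ∪ (E^1)^{-1} be path closed (if ef^{-1} is admissible and f^{-1} ∈ A then e ∈ A; if e^{-1}f is admissible and f ∈ A then e^{-1} ∈ A). If a vertex v does not belong to V(A), then for every n ≥ 1 and every n-ball B of Ω(E,C) at v, the boundary ∂B is not contained in the ∂-closure of A (in particular ∂B ⊄ A). -/
/-!
STATEMENT 17: Let `(E,C)` be a finite bipartite separated graph and
`A ⊆ E^1 ∪ (E^1)⁻¹` a path closed set of letters.  If a vertex `v` does not
belong to `V(A)`, then for every `n ≥ 1` and every `n`-ball `B` of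
`Ω(E,C)` at `v`, the boundary `∂B` is not contained in the `∂`-closure of
`A` (in particular `∂B ⊄ A`).
-/

section SepGraph

-- A finite bipartite separated graph: ranges in `V0 = E^{0,0}`, sources in
-- `V1 = E^{0,1}`, separation `C v` a partition of `r⁻¹(v)`.
variable {V0 V1 E : Type} [DecidableEq E]
variable (r : E → V0) (s : E → V1) (C : V0 → Set (Set E))

/-- Formal inverse of a letter of `E^1 ∪ (E^1)⁻¹`. -/
def linv (t : E × Bool) : E × Bool := (t.1, !t.2)

/-- Source of a letter, as a vertex of the double graph. -/
def lsrc (t : E × Bool) : V0 ⊕ V1 :=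
  if t.2 then Sum.inr (s t.1) else Sum.inl (r t.1)

/-- Target of a letter. -/
def ltgt (t : E × Bool) : V0 ⊕ V1 :=
  if t.2 then Sum.inl (r t.1) else Sum.inr (s t.1)

/-- Two edges lie in the same group `X ∈ C`. -/
def sameGroup (e f : E) : Prop := ∃ v, ∃ X ∈ C v, e ∈ X ∧ f ∈ X

/-- Admissibility of a consecutive pair of letters (word read right to
left): targets match sources, no subword `e f⁻¹` with `e = f`, and no
subword `e⁻¹ f` with `X_e = X_f`. -/
def AdmStep (a b : E × Bool) : Prop :=
  lsrc r s a = ltgt r s b ∧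
  (a.2 = true → b.2 = false → a.1 ≠ b.1) ∧
  (a.2 = false → b.2 = true → ¬ sameGroup C a.1 b.1)

/-- Admissible words: the word `t_m ⋯ t_1` is encoded as the list
`[t_m, …, t_1]`. -/
def IsAdmissibleW (L : List (E × Bool)) : Prop :=
  List.Chain' (AdmStep r s C) L

/-- The local configuration `ξ_α = {σ : σ·α ∈ ξ}` of a configuration. -/
def localConf (ξ : Set (FreeGroup E)) (α : FreeGroup E) : Set (E × Bool) :=
  {t | FreeGroup.mk [t] * α ∈ ξ}

/-- The configuration space `Ω(E,C)`: right-convex subsets of `F(E^1)`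
containing `1` all of whose local configurations are of type (c1) or
(c2). -/
def OmegaCfg : Set (Set (FreeGroup E)) :=
  {ξ | (1 : FreeGroup E) ∈ ξ ∧
    (∀ α ∈ ξ, ∀ k : ℕ, FreeGroup.mk (α.toWord.drop k) ∈ ξ) ∧
    (∀ α ∈ ξ,
      (∃ w : V1, localConf ξ α = {t | t.2 = true ∧ s t.1 = w}) ∨
      (∃ v : V0, ∃ f : Set E → E, (∀ X ∈ C v, f X ∈ X) ∧
        localConf ξ α = {t | ∃ X ∈ C v, t.2 = false ∧ t.1 = f X}))}

/-- `ξ ∈ Ω(E,C)_p`: the trivial path `1 ∈ ξ` is based at the vertex `p`. -/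
def AtVertex (ξ : Set (FreeGroup E)) (p : V0 ⊕ V1) : Prop :=
  match p with
  | Sum.inr w => localConf ξ 1 = {t | t.2 = true ∧ s t.1 = w}
  | Sum.inl v => ∃ f : Set E → E, (∀ X ∈ C v, f X ∈ X) ∧
      localConf ξ 1 = {t | ∃ X ∈ C v, t.2 = false ∧ t.1 = f X}

/-- The `n`-ball `ξ^n`. -/
def cball (n : ℕ) (ξ : Set (FreeGroup E)) : Set (FreeGroup E) :=
  {α ∈ ξ | α.toWord.length ≤ n}

/-- `α` is a maximal element of `B` (no one-letter extension stays in
`B`). -/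
def MaxIn (B : Set (FreeGroup E)) (α : FreeGroup E) : Prop :=
  α ∈ B ∧ ∀ t : E × Bool,
    (FreeGroup.mk [t] * α).toWord.length = α.toWord.length + 1 →
    FreeGroup.mk [t] * α ∉ B

/-- The boundary `∂B`: terminal edges of maximal elements of `B`. -/
def bdry (B : Set (FreeGroup E)) : Set (E × Bool) :=
  {t | ∃ α, MaxIn B α ∧ α.toWord.head? = some t}

/-- `A` is path closed. -/
def PathClosed (A : Set (E × Bool)) : Prop :=
  (∀ e f : E, IsAdmissibleW r s C [(e, true), (f, false)] →
    (f, false) ∈ A → (e, true) ∈ A) ∧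
  (∀ e f : E, IsAdmissibleW r s C [(e, false), (f, true)] →
    (f, true) ∈ A → (e, false) ∈ A)

/-- `A` is `∂`-closed. -/
def DClosed (A : Set (E × Bool)) : Prop :=
  (∀ (w : V1) (e : E), s e = w → (∃ f, s f = w ∧ f ≠ e) →
    (∀ f, s f = w → f ≠ e → (f, true) ∈ A) → (e, false) ∈ A) ∧
  (∀ v : V0, ∀ X ∈ C v, (∃ Y ∈ C v, Y ≠ X) →
    (∀ Y ∈ C v, Y ≠ X → ∃ y ∈ Y, (y, false) ∈ A) →
    ∀ x ∈ X, (x, true) ∈ A)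

/-- The `∂`-closure `Ā` of `A`. -/
def dcl (A : Set (E × Bool)) : Set (E × Bool) :=
  ⋂₀ {B | DClosed s C B ∧ A ⊆ B}

/-- The vertex set `V(A)`. -/
def VA (A : Set (E × Bool)) : Set (V0 ⊕ V1) :=
  {p | match p with
    | Sum.inl v => ∀ X ∈ C v, ∃ x ∈ X, (x, false) ∈ dcl s C A
    | Sum.inr w => ∀ e : E, s e = w → (e, true) ∈ dcl s C A}

end SepGraph

section Aux

variable {V0 V1 E : Type} [DecidableEq E]

/-- If `t` does not cancel against the head of `α`, then prepending `t`
gives the reduced word `t :: α.toWord`. -/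
lemma aux_toWord_cons (t h : E × Bool) (α : FreeGroup E)
    (hh : α.toWord.head? = some h) (hc : ¬(t.1 = h.1 ∧ t.2 = !h.2)) :
    (FreeGroup.mk [t] * α).toWord = t :: α.toWord := by
  obtain ⟨L, hL⟩ : ∃ L, α.toWord = h :: L := by
    cases hw : α.toWord with
    | nil => rw [hw] at hh; simp at hh
    | cons a L =>
      rw [hw] at hh; simp at hh
      exact ⟨L, by rw [hh]⟩
  have h1 : FreeGroup.mk [t] * α = FreeGroup.mk (t :: α.toWord) := by
    conv_lhs => rw [← FreeGroup.mk_toWord (x := α)]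
    rw [FreeGroup.mul_mk]
    rfl
  rw [h1, FreeGroup.toWord_mk, FreeGroup.reduce.cons, FreeGroup.reduce_toWord, hL]
  show (if t.1 = h.1 ∧ t.2 = !h.2 then L else t :: h :: L) = t :: h :: L
  rw [if_neg hc]

/-- Prepending the inverse of the head removes the head. -/
lemma aux_smul_linv (h : E × Bool) (α : FreeGroup E)
    (hh : α.toWord.head? = some h) :
    FreeGroup.mk [(h.1, !h.2)] * α = FreeGroup.mk α.toWord.tail := by
  obtain ⟨L, hL⟩ : ∃ L, α.toWord = h :: L := by
    cases hw : α.toWord with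
    | nil => rw [hw] at hh; simp at hh
    | cons a L =>
      rw [hw] at hh; simp at hh
      exact ⟨L, by rw [hh]⟩
  have h1 : α = FreeGroup.mk (h :: L) := by rw [← hL, FreeGroup.mk_toWord]
  have h2 : FreeGroup.mk [(h.1, !h.2)] = (FreeGroup.mk [h])⁻¹ := by
    rw [FreeGroup.inv_mk]
    rfl
  rw [hL]
  show FreeGroup.mk [(h.1, !h.2)] * α = FreeGroup.mk ((h :: L).tail)
  rw [h1, h2, show (h :: L) = [h] ++ L from rfl, ← FreeGroup.mul_mk, ← mul_assoc,
    inv_mul_cancel, one_mul]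
  rfl

lemma aux_toWord_mk_length_le (L : List (E × Bool)) :
    (FreeGroup.mk L).toWord.length ≤ L.length := by
  rw [FreeGroup.toWord_mk]
  exact FreeGroup.Red.length_le FreeGroup.reduce.red

/-- The `∂`-closure is `∂`-closed. -/
lemma aux_dcl_DClosed (s : E → V1) (C : V0 → Set (Set E)) (A : Set (E × Bool)) :
    DClosed s C (dcl s C A) := by
  constructor
  · intro w e hse hex hall
    intro B hB
    exact hB.1.1 w e hse hex fun f hf hfe => (hall f hf hfe) B hB
  · intro v X hX hex hall x hx
    intro B hB
    refine hB.1.2 v X hX hex (fun Y hY hYX => ?_) x hx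
    obtain ⟨y, hy, hyA⟩ := hall Y hY hYX
    exact ⟨y, hy, hyA B hB⟩

/-- If the only possible extension letter of `α` in `ξ` is the inverse of its
head, then `α` is maximal in every ball containing it. -/
lemma aux_max_of_only (ξ : Set (FreeGroup E)) (n : ℕ) (α : FreeGroup E)
    (t : E × Bool) (hαξ : α ∈ ξ) (hlen : α.toWord.length ≤ n)
    (hh : α.toWord.head? = some t)
    (honly : ∀ u : E × Bool, FreeGroup.mk [u] * α ∈ ξ → u = (t.1, !t.2)) :
    MaxIn (cball n ξ) α := by
  refine ⟨⟨hαξ, hlen⟩, fun u hul hu => ?_⟩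
  have hpos : 0 < α.toWord.length := by
    cases hw : α.toWord with
    | nil => rw [hw] at hh; simp at hh
    | cons a L => simp [hw]
  have heq := honly u hu.1
  subst heq
  rw [aux_smul_linv t α hh] at hul
  have h2 := aux_toWord_mk_length_le (E := E) α.toWord.tail
  rw [List.length_tail] at h2
  omega

/-- Key downward induction: any head letter of a nonempty element of the
`n`-ball lies in the `∂`-closure of `A`, provided the boundary does. -/
lemma aux_key (s : E → V1) (C : V0 → Set (Set E))
    (hdisj : ∀ v, ∀ X ∈ C v, ∀ Y ∈ C v, (X ∩ Y).Nonempty → X = Y)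
    (A : Set (E × Bool)) (ξ : Set (FreeGroup E)) (hξ : ξ ∈ OmegaCfg s C)
    (n : ℕ) (hsub : bdry (cball n ξ) ⊆ dcl s C A) :
    ∀ j : ℕ, ∀ α : FreeGroup E, α ∈ ξ → 1 ≤ α.toWord.length →
      α.toWord.length + j = n → ∀ t : E × Bool,
      α.toWord.head? = some t → t ∈ dcl s C A := by
  obtain ⟨h1ξ, hconv, hloc⟩ := hξ
  intro j
  induction j with
  | zero =>
    intro α hαξ hα1 hαn t hht
    refine hsub ⟨α, ⟨⟨hαξ, by omega⟩, fun u hul hu => ?_⟩, hht⟩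
    have := hu.2
    omega
  | succ j ih =>
    intro α hαξ hα1 hαn t hht
    -- the inverse of the head is always in the local configuration
    have hlinv : FreeGroup.mk [(t.1, !t.2)] * α ∈ ξ := by
      rw [aux_smul_linv t α hht, ← List.drop_one]
      exact hconv α hαξ 1
    rcases hloc α hαξ with ⟨w, hw⟩ | ⟨v, f, hf, hw⟩
    · -- case (c1)
      have hmem : (t.1, !t.2) ∈ localConf ξ α := hlinv
      rw [hw] at hmem
      obtain ⟨hb, hsw⟩ := hmem
      have ht2 : t.2 = false := by
        cases h : t.2
        · rfl
        · rw [h] at hb; simp at hb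
      have hse : s t.1 = w := hsw
      by_cases hex : ∃ g : E, s g = w ∧ g ≠ t.1
      · -- use ∂-closedness, clause 1
        have hall : ∀ g : E, s g = w → g ≠ t.1 → (g, true) ∈ dcl s C A := by
          intro g hg hgne
          have humem : (g, true) ∈ localConf ξ α := by
            rw [hw]; exact ⟨rfl, hg⟩
          have hcons := aux_toWord_cons (g, true) t α hht
            (fun hc => hgne hc.1)
          have hβξ : FreeGroup.mk [(g, true)] * α ∈ ξ := humem
          refine ih (FreeGroup.mk [(g, true)] * α) hβξ ?_ ?_ (g, true) ?_
          · rw [hcons]; simp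
          · rw [hcons]; simp only [List.length_cons]; omega
          · rw [hcons]; rfl
        have := (aux_dcl_DClosed s C A).1 w t.1 hse hex hall
        have htt : t = (t.1, false) := by
          rw [← ht2]
        rw [htt]
        exact this
      · -- α is maximal
        push_neg at hex
        refine hsub ⟨α, aux_max_of_only ξ n α t hαξ (by omega) hht ?_, hht⟩
        intro u huξ
        have humem : u ∈ localConf ξ α := huξ
        rw [hw] at humem
        obtain ⟨hu2, husw⟩ := humem
        have hu1 : u.1 = t.1 := hex u.1 husw
        refine Prod.ext_iff.mpr ⟨hu1, ?_⟩
        rw [hu2, ht2]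
        rfl
    · -- case (c2)
      have hmem : (t.1, !t.2) ∈ localConf ξ α := hlinv
      rw [hw] at hmem
      obtain ⟨X₀, hX₀, hb, he⟩ := hmem
      have ht2 : t.2 = true := by
        cases h : t.2
        · rw [h] at hb; simp at hb
        · rfl
      have heX₀ : t.1 ∈ X₀ := by rw [he]; exact hf X₀ hX₀
      by_cases hex : ∃ Y ∈ C v, Y ≠ X₀
      · -- use ∂-closedness, clause 2
        have hall : ∀ Y ∈ C v, Y ≠ X₀ → ∃ y ∈ Y, (y, false) ∈ dcl s C A := by
          intro Y hY hYX
          have hfYne : f Y ≠ t.1 := by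
            intro hfY
            exact hYX (hdisj v Y hY X₀ hX₀ ⟨t.1, hfY ▸ hf Y hY, heX₀⟩)
          have humem : (f Y, false) ∈ localConf ξ α := by
            rw [hw]; exact ⟨Y, hY, rfl, rfl⟩
          have hcons := aux_toWord_cons (f Y, false) t α hht
            (fun hc => hfYne hc.1)
          have hβξ : FreeGroup.mk [(f Y, false)] * α ∈ ξ := humem
          refine ⟨f Y, hf Y hY, ih (FreeGroup.mk [(f Y, false)] * α) hβξ ?_ ?_
            (f Y, false) ?_⟩
          · rw [hcons]; simp
          · rw [hcons]; simp only [List.length_cons]; omega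
          · rw [hcons]; rfl
        have := (aux_dcl_DClosed s C A).2 v X₀ hX₀ hex hall t.1 heX₀
        have htt : t = (t.1, true) := by rw [← ht2]
        rw [htt]
        exact this
      · -- α is maximal
        push_neg at hex
        refine hsub ⟨α, aux_max_of_only ξ n α t hαξ (by omega) hht ?_, hht⟩
        intro u huξ
        have humem : u ∈ localConf ξ α := huξ
        rw [hw] at humem
        obtain ⟨X, hX, hu2, hu1⟩ := humem
        have hXX₀ : X = X₀ := hex X hX
        refine Prod.ext_iff.mpr ⟨?_, ?_⟩
        · rw [hu1, hXX₀, ← he]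
        · rw [hu2, ht2]
          rfl

end Aux

theorem stmt17 {V0 V1 E : Type} [DecidableEq E]
    (r : E → V0) (s : E → V1) (C : V0 → Set (Set E))
    (hV0 : Finite V0) (hV1 : Finite V1) (hE : Finite E)
    -- separated graph axioms
    (hne : ∀ v, ∀ X ∈ C v, X.Nonempty)
    (hrange : ∀ v, ∀ X ∈ C v, ∀ x ∈ X, r x = v)
    (hcover : ∀ e, ∃ X ∈ C (r e), e ∈ X)
    (hdisj : ∀ v, ∀ X ∈ C v, ∀ Y ∈ C v, (X ∩ Y).Nonempty → X = Y)
    (A : Set (E × Bool)) (hA : PathClosed r s C A)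
    (p : V0 ⊕ V1) (hp : p ∉ VA s C A) :
    ∀ n : ℕ, 1 ≤ n → ∀ ξ ∈ OmegaCfg s C, AtVertex s C ξ p →
      ¬ bdry (cball n ξ) ⊆ dcl s C A := by
  intro n hn ξ hξ hat hsub
  apply hp
  have key := aux_key s C hdisj A ξ hξ n hsub (n - 1)
  cases p with
  | inl v =>
    obtain ⟨f, hf, hloc1⟩ := hat
    show ∀ X ∈ C v, ∃ x ∈ X, (x, false) ∈ dcl s C A
    intro X hX
    have hmem : (f X, false) ∈ localConf ξ 1 := by
      rw [hloc1]; exact ⟨X, hX, rfl, rfl⟩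
    have hβ : FreeGroup.mk [(f X, false)] * 1 ∈ ξ := hmem
    rw [mul_one] at hβ
    have htw : (FreeGroup.mk [(f X, false)]).toWord = [(f X, false)] := by
      rw [FreeGroup.toWord_mk, FreeGroup.reduce_singleton]
    refine ⟨f X, hf X hX, key _ hβ ?_ ?_ (f X, false) ?_⟩
    · rw [htw]; simp
    · rw [htw]; simp; omega
    · rw [htw]; rfl
  | inr w =>
    show ∀ e : E, s e = w → (e, true) ∈ dcl s C A
    intro e hse
    have hmem : (e, true) ∈ localConf ξ 1 := by
      rw [hat]; exact ⟨rfl, hse⟩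
    have hβ : FreeGroup.mk [(e, true)] * 1 ∈ ξ := hmem
    rw [mul_one] at hβ
    have htw : (FreeGroup.mk [(e, true)]).toWord = [(e, true)] := by
      rw [FreeGroup.toWord_mk, FreeGroup.reduce_singleton]
    refine key _ hβ ?_ ?_ (e, true) ?_
    · rw [htw]; simp
    · rw [htw]; simp; omega
    · rw [htw]; rfl
end

section
/- In an abelian monoid M presented as a graph monoid M(E,C) of a finitely separated graph, the quotient by the order-ideal generated by a hereditary C-saturated set H satisfies M(E,C)/M(H) ≅ M(E/H, C/H); in particular, if M(E,C) is a refinement monoid, then M(E/H, C/H) is a refinement monoid. -/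
/-!
STATEMENT 19: For a finitely separated graph `(E,C)` and a hereditary
`C`-saturated `H`, the quotient of the graph monoid `M(E,C)` by the
order-ideal `M(H)` generated by `H` is isomorphic to `M(E/H, C/H)`; in
particular, if `M(E,C)` is a refinement monoid, so is `M(E/H, C/H)`.
-/

section GraphMonoid
variable {V E : Type} (s : E → V) (C : V → Set (Set E))

/-- The defining relations of the graph monoid `M(E,C)` on the free
abelian monoid (multisets) over the vertices: `a_v = Σ_{e ∈ X} a_{s(e)}`
for `X ∈ C_v` (the sum makes sense for finite `X`). -/
def gmRel : Multiset V → Multiset V → Prop := fun m m' =>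
  ∃ (v : V) (X : Set E), X ∈ C v ∧ ∃ hfin : X.Finite,
    m = {v} ∧ m' = hfin.toFinset.val.map s

/-- The congruence generated by the graph monoid relations. -/
def gmCon : AddCon (Multiset V) := addConGen (gmRel s C)

/-- The generator `a_v` of `M(E,C)`. -/
def gmGen (v : V) : (gmCon s C).Quotient := (gmCon s C).mk' {v}

end GraphMonoid

/-- Order-ideals of an abelian monoid. -/
def IsOrderIdeal {M : Type*} [AddCommMonoid M] (I : Set M) : Prop :=
  (0 : M) ∈ I ∧ (∀ x y, x ∈ I → y ∈ I → x + y ∈ I) ∧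
    (∀ x y : M, x + y ∈ I → x ∈ I ∧ y ∈ I)

/-- The order-ideal `M(H)` generated by the classes of vertices of `H`. -/
def MH {V E : Type} (s : E → V) (C : V → Set (Set E)) (H : Set V) :
    Set (gmCon s C).Quotient :=
  ⋂₀ {I | IsOrderIdeal I ∧ ∀ v ∈ H, gmGen s C v ∈ I}

/-- The congruence `x ~ y ⇔ ∃ a, b ∈ I, x + a = y + b` defining the
quotient of an abelian monoid by an order-ideal `I`. -/
def quotCon {M : Type*} [AddCommMonoid M] (I : Set M) : AddCon M :=
  addConGen fun x y => ∃ a ∈ I, ∃ b ∈ I, x + a = y + b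

/-- Refinement monoids. -/
def IsRefinement (M : Type*) [AddCommMonoid M] : Prop :=
  ∀ a b c d : M, a + b = c + d →
    ∃ x₁₁ x₁₂ x₂₁ x₂₂ : M, a = x₁₁ + x₁₂ ∧ b = x₂₁ + x₂₂ ∧
      c = x₁₁ + x₂₁ ∧ d = x₁₂ + x₂₂

section Quot
variable {V E : Type} (s : E → V) (C : V → Set (Set E)) (H : Set V)

/-- The vertices of the quotient graph `E/H`. -/
def Vtq : Type := {v : V // v ∉ H}

/-- The edges of `E/H`. -/
def Eq' : Type := {e : E // s e ∉ H}

/-- The source map of `E/H`. -/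
def srcq : Eq' s H → Vtq (V := V) H := fun e => ⟨s e.1, e.2⟩

/-- The separation `C/H`. -/
def Csq : Vtq (V := V) H → Set (Set (Eq' s H)) := fun v =>
  {S | ∃ X ∈ C v.1, S = {e : Eq' s H | e.1 ∈ X}}

end Quot

----------------------------------------------------------------
-- Auxiliary material
----------------------------------------------------------------

section MsLift
variable {W : Type} {N : Type*} [AddCommMonoid N]

def msLift (f : W → N) : Multiset W →+ N where
  toFun m := (m.map f).sum
  map_zero' := rfl
  map_add' a b := by simp only [Multiset.map_add, Multiset.sum_add]

@[simp] lemma msLift_singleton (f : W → N) (w : W) : msLift f {w} = f w := by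
  change (Multiset.map f {w}).sum = f w
  simp

lemma msLift_finset (f : W → N) {E : Type} (g : E → W) (T : Finset E) :
    msLift f (T.val.map g) = ∑ e ∈ T, f (g e) := by
  change ((T.val.map g).map f).sum = _
  rw [Multiset.map_map]
  rfl

lemma mk'_multiset (c : AddCon (Multiset W)) (m : Multiset W) :
    c.mk' m = msLift (fun w => c.mk' {w}) m := by
  induction m using Multiset.induction_on with
  | empty => simp
  | cons a m ih =>
      rw [← Multiset.singleton_add, map_add, map_add, ih, msLift_singleton]

end MsLift

section OrderIdeal
variable {M : Type*} [AddCommMonoid M] {I : Set M}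

/-- `quotCon` is already a congruence. -/
def quotConCon (hI : IsOrderIdeal I) : AddCon M where
  r x y := ∃ a ∈ I, ∃ b ∈ I, x + a = y + b
  iseqv := by
    refine ⟨fun x => ⟨0, hI.1, 0, hI.1, rfl⟩, ?_, ?_⟩
    · rintro x y ⟨a, ha, b, hb, h⟩; exact ⟨b, hb, a, ha, h.symm⟩
    · rintro x y z ⟨a, ha, b, hb, h1⟩ ⟨c, hc, d, hd, h2⟩
      refine ⟨a + c, hI.2.1 _ _ ha hc, d + b, hI.2.1 _ _ hd hb, ?_⟩
      calc x + (a + c) = x + a + c := (add_assoc _ _ _).symm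
        _ = y + b + c := by rw [h1]
        _ = y + c + b := by rw [add_assoc, add_comm b c, ← add_assoc]
        _ = z + d + b := by rw [h2]
        _ = z + (d + b) := add_assoc _ _ _
  add' := by
    rintro w x y z ⟨a, ha, b, hb, h1⟩ ⟨c, hc, d, hd, h2⟩
    refine ⟨a + c, hI.2.1 _ _ ha hc, b + d, hI.2.1 _ _ hb hd, ?_⟩
    calc w + y + (a + c) = (w + a) + (y + c) := by
          rw [add_add_add_comm]
      _ = (x + b) + (z + d) := by rw [h1, h2]
      _ = x + z + (b + d) := by rw [add_add_add_comm]

lemma quotCon_eq (hI : IsOrderIdeal I) : quotCon I = quotConCon hI :=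
  AddCon.addConGen_of_addCon (quotConCon hI)

lemma quotCon_iff (hI : IsOrderIdeal I) {x y : M} :
    quotCon I x y ↔ ∃ a ∈ I, ∃ b ∈ I, x + a = y + b := by
  rw [quotCon_eq hI]; rfl

lemma quotCon_mk_eq_mk (hI : IsOrderIdeal I) {x y : M} (h : ∃ a ∈ I, ∃ b ∈ I, x + a = y + b) :
    (quotCon I).mk' x = (quotCon I).mk' y :=
  (AddCon.eq _).mpr ((quotCon_iff hI).mpr h)

lemma quotCon_mk_zero (hI : IsOrderIdeal I) {x : M} (hx : x ∈ I) :
    (quotCon I).mk' x = 0 := by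
  have : (quotCon I).mk' x = (quotCon I).mk' 0 :=
    quotCon_mk_eq_mk hI ⟨0, hI.1, x, hx, by rw [add_zero, zero_add]⟩
  simpa using this

lemma refinement_quot (hI : IsOrderIdeal I) (hM : IsRefinement M) :
    IsRefinement (quotCon I).Quotient := by
  intro a b c d h
  obtain ⟨xa, rfl⟩ := AddCon.mk'_surjective a
  obtain ⟨xb, rfl⟩ := AddCon.mk'_surjective b
  obtain ⟨xc, rfl⟩ := AddCon.mk'_surjective c
  obtain ⟨xd, rfl⟩ := AddCon.mk'_surjective d
  rw [← map_add, ← map_add] at h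
  have h' : quotCon I (xa + xb) (xc + xd) := (AddCon.eq _).mp h
  obtain ⟨p, hp, q, hq, hpq⟩ := (quotCon_iff hI).mp h'
  have hpq' : (xa + p) + xb = xc + (xd + q) := by
    calc (xa + p) + xb = xa + xb + p := by abel
      _ = xc + xd + q := hpq
      _ = xc + (xd + q) := by abel
  obtain ⟨y11, y12, y21, y22, h1, h2, h3, h4⟩ := hM _ _ _ _ hpq'
  refine ⟨(quotCon I).mk' y11, (quotCon I).mk' y12, (quotCon I).mk' y21,
    (quotCon I).mk' y22, ?_, ?_, ?_, ?_⟩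
  · rw [← map_add, ← h1]
    exact quotCon_mk_eq_mk hI ⟨p, hp, 0, hI.1, by rw [add_zero]⟩
  · rw [← map_add, ← h2]
  · rw [← map_add, ← h3]
  · rw [← map_add, ← h4]
    exact quotCon_mk_eq_mk hI ⟨q, hq, 0, hI.1, by rw [add_zero]⟩

lemma refinement_equiv {A B : Type*} [AddCommMonoid A] [AddCommMonoid B]
    (e : A ≃+ B) (h : IsRefinement A) : IsRefinement B := by
  intro a b c d hab
  have : e.symm a + e.symm b = e.symm c + e.symm d := by
    rw [← map_add, ← map_add, hab]
  obtain ⟨x11, x12, x21, x22, h1, h2, h3, h4⟩ := h _ _ _ _ this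
  refine ⟨e x11, e x12, e x21, e x22, ?_, ?_, ?_, ?_⟩
  · rw [← map_add, ← h1]; simp
  · rw [← map_add, ← h2]; simp
  · rw [← map_add, ← h3]; simp
  · rw [← map_add, ← h4]; simp

end OrderIdeal

section Conical

/-- A graph monoid is conical as soon as every relation multiset is nonzero. -/
lemma gm_conical {W F : Type} (σ : F → W) (D : W → Set (Set F))
    (h : ∀ v, ∀ X ∈ D v, ∀ hf : X.Finite, hf.toFinset.val.map σ ≠ 0)
    (a b : (gmCon σ D).Quotient) (hab : a + b = 0) : a = 0 ∧ b = 0 := by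
  set c0 : AddCon (Multiset W) :=
    { r := fun m m' => (m = 0 ↔ m' = 0)
      iseqv := ⟨fun _ => Iff.rfl, Iff.symm, Iff.trans⟩
      add' := by
        intro w x y z h1 h2
        constructor <;> intro hz
        · rw [add_eq_zero] at hz ⊢  -- name may differ
          exact ⟨h1.mp hz.1, h2.mp hz.2⟩
        · rw [add_eq_zero] at hz ⊢
          exact ⟨h1.mpr hz.1, h2.mpr hz.2⟩ } with hc0
  have hle : gmCon σ D ≤ c0 := by
    refine AddCon.addConGen_le.mpr ?_
    rintro m m' ⟨v, X, hX, hf, rfl, rfl⟩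
    constructor
    · intro h'; exact absurd h' (by simp)
    · intro h'; exact absurd h' (h v X hX hf)
  obtain ⟨m, rfl⟩ := AddCon.mk'_surjective a
  obtain ⟨n, rfl⟩ := AddCon.mk'_surjective b
  rw [← map_add] at hab
  have : (gmCon σ D).mk' (m + n) = (gmCon σ D).mk' 0 := by simpa using hab
  have h2 : gmCon σ D (m + n) 0 := (AddCon.eq _).mp this
  have h3 : m + n = 0 := (hle h2).mpr rfl
  rw [add_eq_zero] at h3
  constructor <;> [rw [h3.1]; rw [h3.2]] <;> simp

end Conical


----------------------------------------------------------------
-- Main construction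
----------------------------------------------------------------

section Main
variable {V E : Type} (s : E → V) (C : V → Set (Set E)) (H : Set V)

lemma mk'_eq {M : Type*} [AddMonoid M] {c : AddCon M} {a b : M} (h : c a b) :
    c.mk' a = c.mk' b := Quot.sound h

lemma MH_orderIdeal : IsOrderIdeal (MH s C H) := by
  refine ⟨?_, ?_, ?_⟩
  · intro I hI; exact hI.1.1
  · intro x y hx hy I hI; exact hI.1.2.1 _ _ (hx I hI) (hy I hI)
  · intro x y hxy
    constructor <;> intro I hI
    · exact (hI.1.2.2 _ _ (hxy I hI)).1
    · exact (hI.1.2.2 _ _ (hxy I hI)).2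

lemma gmGen_mem_MH {v : V} (hv : v ∈ H) : gmGen s C v ∈ MH s C H :=
  fun I hI => hI.2 v hv

lemma MH_min {I : Set (gmCon s C).Quotient} (hI : IsOrderIdeal I)
    (hgen : ∀ v ∈ H, gmGen s C v ∈ I) : MH s C H ⊆ I :=
  fun x hx => hx I ⟨hI, hgen⟩

lemma quotGraph_conical
    (hsat : ∀ v, ∀ X ∈ C v, (∀ x ∈ X, s x ∈ H) → v ∈ H) :
    ∀ a b : (gmCon (srcq s H) (Csq s C H)).Quotient, a + b = 0 → a = 0 ∧ b = 0 := by
  refine gm_conical _ _ ?_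
  rintro v' S ⟨X, hX, rfl⟩ hf h0
  have hnall : ¬ ∀ x ∈ X, s x ∈ H := fun h => v'.2 (hsat v'.1 X hX h)
  push_neg at hnall
  obtain ⟨e, heX, heH⟩ := hnall
  have hmem : (⟨e, heH⟩ : Eq' s H) ∈ hf.toFinset := hf.mem_toFinset.mpr heX
  have : srcq s H ⟨e, heH⟩ ∈ Multiset.map (srcq s H) hf.toFinset.val :=
    Multiset.mem_map_of_mem _ (Finset.mem_val.mpr hmem)
  rw [h0] at this
  exact Multiset.notMem_zero _ this

lemma finX' {X : Set E} (hfX : X.Finite) : {e : Eq' s H | e.1 ∈ X}.Finite := by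
  have : {e : Eq' s H | e.1 ∈ X} = (Subtype.val : Eq' s H → E) ⁻¹' X := rfl
  rw [this]
  exact Set.Finite.preimage (Set.injOn_of_injective Subtype.val_injective) hfX

lemma sum_quot {N : Type*} [AddCommMonoid N] {X : Set E} (hfX : X.Finite)
    (hfX' : {e : Eq' s H | e.1 ∈ X}.Finite) (g : E → N)
    (hg : ∀ e ∈ X, s e ∈ H → g e = 0) :
    ∑ e ∈ hfX.toFinset, g e = ∑ e' ∈ hfX'.toFinset, g e'.1 := by
  refine Finset.sum_bij_ne_zero
    (fun e he hne => (⟨e, fun hH => hne (hg e (hfX.mem_toFinset.mp he) hH)⟩ : Eq' s H))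
    ?_ ?_ ?_ ?_
  · intro a h1 h2
    exact hfX'.mem_toFinset.mpr (hfX.mem_toFinset.mp h1)
  · intro a1 h11 h12 a2 h21 h22 heq
    exact congrArg Subtype.val heq
  · intro b hb hgb
    exact ⟨b.1, hfX.mem_toFinset.mpr (hfX'.mem_toFinset.mp hb), hgb, rfl⟩
  · intro a h1 h2; rfl

open Classical in
noncomputable def fwdGen : V → (gmCon (srcq s H) (Csq s C H)).Quotient :=
  fun v => if h : v ∈ H then 0 else gmGen (srcq s H) (Csq s C H) ⟨v, h⟩

lemma fwdGen_mem {v : V} (h : v ∈ H) : fwdGen s C H v = 0 := by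
  simp only [fwdGen]; rw [dif_pos h]

lemma fwdGen_not_mem {v : V} (h : v ∉ H) :
    fwdGen s C H v = gmGen (srcq s H) (Csq s C H) ⟨v, h⟩ := by
  simp only [fwdGen]; rw [dif_neg h]

lemma gen_expand {v : V} {X : Set E} (hX : X ∈ C v) (hfX : X.Finite) :
    gmGen s C v = ∑ e ∈ hfX.toFinset, gmGen s C (s e) := by
  have h1 : (gmCon s C).mk' {v} = (gmCon s C).mk' (hfX.toFinset.val.map s) :=
    mk'_eq (AddConGen.Rel.of _ _ ⟨v, X, hX, hfX, rfl, rfl⟩)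
  rw [gmGen, h1, mk'_multiset, msLift_finset]
  rfl

lemma gen_expand' {v : V} (hv : v ∉ H) {X : Set E} (hX : X ∈ C v)
    (hfX' : {e : Eq' s H | e.1 ∈ X}.Finite) :
    gmGen (srcq s H) (Csq s C H) ⟨v, hv⟩ =
      ∑ e' ∈ hfX'.toFinset, gmGen (srcq s H) (Csq s C H) (srcq s H e') := by
  have h1 : (gmCon (srcq s H) (Csq s C H)).mk' {(⟨v, hv⟩ : Vtq H)} =
      (gmCon (srcq s H) (Csq s C H)).mk' (hfX'.toFinset.val.map (srcq s H)) :=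
    mk'_eq (AddConGen.Rel.of _ _ ⟨⟨v, hv⟩, {e : Eq' s H | e.1 ∈ X}, ⟨X, hX, rfl⟩, hfX', rfl, rfl⟩)
  unfold gmGen
  refine h1.trans ?_
  rw [mk'_multiset, msLift_finset]

variable (r : E → V)

lemma fwd_respects
    (hrange : ∀ v, ∀ X ∈ C v, ∀ x ∈ X, r x = v)
    (hher : ∀ e, r e ∈ H → s e ∈ H) :
    ∀ m m', gmRel s C m m' →
      msLift (fwdGen s C H) m = msLift (fwdGen s C H) m' := by
  rintro m m' ⟨v, X, hX, hfX, rfl, rfl⟩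
  rw [msLift_singleton, msLift_finset]
  by_cases h : v ∈ H
  · rw [fwdGen_mem s C H h]
    symm
    refine Finset.sum_eq_zero ?_
    intro e he
    have heX := hfX.mem_toFinset.mp he
    exact fwdGen_mem s C H (hher e (by rw [hrange v X hX e heX]; exact h))
  · rw [fwdGen_not_mem s C H h]
    have hfX' := finX' s H (X := X) hfX
    rw [gen_expand' s C H h hX hfX']
    rw [sum_quot s H hfX hfX' (fun e => fwdGen s C H (s e))
      (fun e _ hH => fwdGen_mem s C H hH)]
    refine Finset.sum_congr rfl ?_
    intro e' _
    exact (fwdGen_not_mem s C H e'.2).symm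

noncomputable def fwdHom0
    (hrange : ∀ v, ∀ X ∈ C v, ∀ x ∈ X, r x = v)
    (hher : ∀ e, r e ∈ H → s e ∈ H) :
    (gmCon s C).Quotient →+ (gmCon (srcq s H) (Csq s C H)).Quotient :=
  (gmCon s C).lift (msLift (fwdGen s C H))
    (AddCon.addConGen_le.2 fun x y hxy =>
      (AddCon.ker_rel _).mpr (fwd_respects s C H r hrange hher x y hxy))

lemma fwdHom0_mk (hrange : ∀ v, ∀ X ∈ C v, ∀ x ∈ X, r x = v) (hher : ∀ e, r e ∈ H → s e ∈ H) (m : Multiset V) :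
    fwdHom0 s C H r hrange hher ((gmCon s C).mk' m) = msLift (fwdGen s C H) m :=
  AddCon.lift_mk' _ _

lemma fwdHom0_gen (hrange : ∀ v, ∀ X ∈ C v, ∀ x ∈ X, r x = v) (hher : ∀ e, r e ∈ H → s e ∈ H) (v : V) :
    fwdHom0 s C H r hrange hher (gmGen s C v) = fwdGen s C H v := by
  rw [gmGen, fwdHom0_mk, msLift_singleton]

lemma MH_ker (hrange : ∀ v, ∀ X ∈ C v, ∀ x ∈ X, r x = v) (hher : ∀ e, r e ∈ H → s e ∈ H)
    (hsat : ∀ v, ∀ X ∈ C v, (∀ x ∈ X, s x ∈ H) → v ∈ H) :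
    ∀ x ∈ MH s C H, fwdHom0 s C H r hrange hher x = 0 := by
  have := MH_min s C H (I := {x | fwdHom0 s C H r hrange hher x = 0}) ?_ ?_
  · exact fun x hx => this hx
  · refine ⟨map_zero _, ?_, ?_⟩
    · intro x y hx hy
      simp only [Set.mem_setOf_eq] at *
      rw [map_add, hx, hy, add_zero]
    · intro x y hxy
      simp only [Set.mem_setOf_eq] at *
      exact quotGraph_conical s C H hsat _ _ (by rw [← map_add]; exact hxy)
  · intro v hv
    simp only [Set.mem_setOf_eq]
    rw [fwdHom0_gen, fwdGen_mem s C H hv]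

noncomputable def fwdHom (hrange : ∀ v, ∀ X ∈ C v, ∀ x ∈ X, r x = v) (hher : ∀ e, r e ∈ H → s e ∈ H)
    (hsat : ∀ v, ∀ X ∈ C v, (∀ x ∈ X, s x ∈ H) → v ∈ H) :
    (quotCon (MH s C H)).Quotient →+ (gmCon (srcq s H) (Csq s C H)).Quotient :=
  (quotCon (MH s C H)).lift (fwdHom0 s C H r hrange hher)
    (AddCon.addConGen_le.2 (by
      rintro x y ⟨a, ha, b, hb, hab⟩
      refine (AddCon.ker_rel _).mpr ?_
      have h1 := congrArg (fwdHom0 s C H r hrange hher) hab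
      rw [map_add, map_add, MH_ker s C H r hrange hher hsat a ha,
        MH_ker s C H r hrange hher hsat b hb, add_zero, add_zero] at h1
      exact h1))

lemma fwdHom_mk (hrange : ∀ v, ∀ X ∈ C v, ∀ x ∈ X, r x = v) (hher : ∀ e, r e ∈ H → s e ∈ H)
    (hsat : ∀ v, ∀ X ∈ C v, (∀ x ∈ X, s x ∈ H) → v ∈ H) (x : (gmCon s C).Quotient) :
    fwdHom s C H r hrange hher hsat ((quotCon (MH s C H)).mk' x) =
      fwdHom0 s C H r hrange hher x :=
  AddCon.lift_mk' _ _

noncomputable def bwdGen : Vtq (V := V) H → (quotCon (MH s C H)).Quotient :=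
  fun v' => (quotCon (MH s C H)).mk' (gmGen s C v'.1)

lemma bwd_respects (hfin : ∀ v, ∀ X ∈ C v, X.Finite) :
    ∀ m m', gmRel (srcq s H) (Csq s C H) m m' →
      msLift (bwdGen s C H) m = msLift (bwdGen s C H) m' := by
  rintro m m' ⟨v', S, ⟨X, hX, rfl⟩, hfX', rfl, rfl⟩
  rw [msLift_singleton, msLift_finset]
  have hfX := hfin v'.1 X hX
  have h1 : bwdGen s C H v' =
      ∑ e ∈ hfX.toFinset, (quotCon (MH s C H)).mk' (gmGen s C (s e)) := by
    rw [bwdGen, gen_expand s C hX hfX, map_sum]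
  rw [h1, sum_quot s H hfX hfX'
    (fun e => (quotCon (MH s C H)).mk' (gmGen s C (s e)))
    (fun e _ hH => quotCon_mk_zero (MH_orderIdeal s C H) (gmGen_mem_MH s C H hH))]
  rfl

noncomputable def bwdHom (hfin : ∀ v, ∀ X ∈ C v, X.Finite) :
    (gmCon (srcq s H) (Csq s C H)).Quotient →+ (quotCon (MH s C H)).Quotient :=
  (gmCon (srcq s H) (Csq s C H)).lift (msLift (bwdGen s C H))
    (AddCon.addConGen_le.2 fun x y hxy =>
      (AddCon.ker_rel _).mpr (bwd_respects s C H hfin x y hxy))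

lemma bwdHom_mk (hfin : ∀ v, ∀ X ∈ C v, X.Finite) (m : Multiset (Vtq (V := V) H)) :
    bwdHom s C H hfin ((gmCon (srcq s H) (Csq s C H)).mk' m) =
      msLift (bwdGen s C H) m :=
  AddCon.lift_mk' _ _

end Main

theorem stmt19 {V E : Type} (r s : E → V) (C : V → Set (Set E))
    -- separated graph axioms, finitely separated
    (hne : ∀ v, ∀ X ∈ C v, X.Nonempty)
    (hrange : ∀ v, ∀ X ∈ C v, ∀ x ∈ X, r x = v)
    (hcover : ∀ e, ∃ X ∈ C (r e), e ∈ X)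
    (hdisj : ∀ v, ∀ X ∈ C v, ∀ Y ∈ C v, (X ∩ Y).Nonempty → X = Y)
    (hfin : ∀ v, ∀ X ∈ C v, X.Finite)
    -- `H` hereditary and `C`-saturated
    (H : Set V)
    (hher : ∀ e, r e ∈ H → s e ∈ H)
    (hsat : ∀ v, ∀ X ∈ C v, (∀ x ∈ X, s x ∈ H) → v ∈ H) :
    ∃ φ : (quotCon (MH s C H)).Quotient ≃+
        (gmCon (srcq s H) (Csq s C H)).Quotient,
      -- `φ` matches the canonical generators
      (∀ (v : V) (hv : v ∉ H),
        φ ((quotCon (MH s C H)).mk' (gmGen s C v)) =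
          gmGen (srcq s H) (Csq s C H) ⟨v, hv⟩) ∧
      -- and `M(E/H, C/H)` inherits refinement from `M(E,C)`
      (IsRefinement (gmCon s C).Quotient →
        IsRefinement (gmCon (srcq s H) (Csq s C H)).Quotient) := by
  set Φ := fwdHom s C H r hrange hher hsat with hΦ
  set Ψ := bwdHom s C H hfin with hΨ
  have key : ∀ a : V, Ψ (fwdGen s C H a) = (quotCon (MH s C H)).mk' (gmGen s C a) := by
    intro a
    by_cases h : a ∈ H
    · rw [fwdGen_mem s C H h, map_zero,
        quotCon_mk_zero (MH_orderIdeal s C H) (gmGen_mem_MH s C H h)]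
    · rw [fwdGen_not_mem s C H h, gmGen, hΨ]
      unfold gmGen
      rw [bwdHom_mk]
      refine (msLift_singleton _ _).trans ?_
      rfl
  have key2 : ∀ v' : Vtq (V := V) H,
      Φ ((quotCon (MH s C H)).mk' (gmGen s C v'.1)) =
        gmGen (srcq s H) (Csq s C H) v' := by
    intro v'
    rw [hΦ, fwdHom_mk, fwdHom0_gen, fwdGen_not_mem s C H v'.2]
    rfl
  have left_inv : ∀ x, Ψ (Φ x) = x := by
    intro x
    obtain ⟨y, rfl⟩ := AddCon.mk'_surjective x
    obtain ⟨m, rfl⟩ := AddCon.mk'_surjective y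
    rw [hΦ, fwdHom_mk, fwdHom0_mk]
    induction m using Multiset.induction_on with
    | empty => simp
    | cons a m ih =>
        simp only [← Multiset.singleton_add, map_add, msLift_singleton]
        rw [ih, key a]
        rfl
  have right_inv : ∀ y, Φ (Ψ y) = y := by
    intro y
    obtain ⟨m, rfl⟩ := AddCon.mk'_surjective y
    rw [hΨ, bwdHom_mk]
    induction m using Multiset.induction_on with
    | empty => simp
    | cons a m ih =>
        simp only [← Multiset.singleton_add, map_add, msLift_singleton]
        rw [ih]
        show Φ (bwdGen s C H a) + _ = _ + _
        rw [bwdGen, key2 a, gmGen]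
  refine ⟨{ toFun := Φ, invFun := Ψ, left_inv := left_inv, right_inv := right_inv,
            map_add' := map_add Φ }, ?_, ?_⟩
  · intro v hv
    exact key2 ⟨v, hv⟩
  · intro hRef
    exact refinement_equiv
      { toFun := Φ, invFun := Ψ, left_inv := left_inv, right_inv := right_inv,
        map_add' := map_add Φ }
      (refinement_quot (MH_orderIdeal s C H) hRef)
end
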